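/- arXiv:2007.07337 — 13 statements merged into one kernel-verified Lean document; each statement's English description precedes it below -/
import Mathlib

section
/- Let A be a real N×N matrix, B a real N×M matrix, C a real M×N matrix, and D a real M×M matrix. Suppose there exists a symmetric positive definite real N×N matrix Q such that A Q Aᵀ + B Bᵀ = Q, A Q Cᵀ + B Dᵀ = 0, and C Q Cᵀ + D Dᵀ = I. Then for every nonzero complex number z such that the complex matrices z·I − A and z⁻¹·I − A are invertible, one has (C (z·I − A)⁻¹ B + D) · (C (z⁻¹·I − A)⁻¹ B + D)ᵀ = I. -/
/-!
With `E = z • 1 - A` and `G = z⁻¹ • 1 - Aᵀ`, the Stein expression `Q - A Q Aᵀ = B Bᵀ` splits as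
`E Q G + E Q Aᵀ + A Q G`, so `E⁻¹ B Bᵀ G⁻¹ = Q + Q Aᵀ G⁻¹ + E⁻¹ A Q`.
Expanding `T(z) T(z⁻¹)ᵀ = (C E⁻¹ B + D)(Bᵀ G⁻¹ Cᵀ + Dᵀ)` with this and the cross condition
`B Dᵀ = -A Q Cᵀ`, the two resolvent terms cancel and what is left is `C Q Cᵀ + D Dᵀ = 1`.
-/

open Matrix

namespace Matrix

variable {R : Type*} [CommRing R] {n m : Type*} [Fintype n]

section Resolvent

variable [DecidableEq n]

theorem stein_eq_of_mul_eq_one {u v : R} (huv : u * v = 1) (A A' Q : Matrix n n R) :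
    Q - A * Q * A' =
      (u • 1 - A) * Q * (v • 1 - A') + (u • 1 - A) * Q * A' + A * Q * (v • 1 - A') := by
  simp only [sub_mul, mul_sub, smul_mul_assoc, mul_smul_comm, smul_sub, smul_smul, one_mul,
    mul_one, mul_comm v u, huv, one_smul]
  abel

theorem inv_mul_stein_mul_inv {u v : R} (huv : u * v = 1) {A A' : Matrix n n R}
    (hu : IsUnit (u • 1 - A).det) (hv : IsUnit (v • 1 - A').det) (Q : Matrix n n R) :
    (u • 1 - A)⁻¹ * (Q - A * Q * A') * (v • 1 - A')⁻¹ =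
      Q + Q * A' * (v • 1 - A')⁻¹ + (u • 1 - A)⁻¹ * A * Q := by
  rw [stein_eq_of_mul_eq_one huv]
  simp only [add_mul, mul_add, ← mul_assoc, nonsing_inv_mul _ hu, one_mul]
  simp only [mul_assoc, mul_nonsing_inv _ hv, mul_one]

noncomputable def transferMatrix (A : Matrix n n R) (B : Matrix n m R) (C : Matrix m n R)
    (D : Matrix m m R) (z : R) : Matrix m m R :=
  C * (z • 1 - A)⁻¹ * B + D

theorem transpose_transferMatrix (A : Matrix n n R) (B : Matrix n m R) (C : Matrix m n R)
    (D : Matrix m m R) (z : R) :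
    (transferMatrix A B C D z)ᵀ = Bᵀ * (z • 1 - Aᵀ)⁻¹ * Cᵀ + Dᵀ := by
  simp only [transferMatrix, transpose_add, transpose_mul, transpose_nonsing_inv, transpose_sub,
    transpose_smul, transpose_one, Matrix.mul_assoc]

end Resolvent

structure IsAllpassGramian [Fintype m] [DecidableEq m] (A : Matrix n n R) (B : Matrix n m R)
    (C : Matrix m n R) (D : Matrix m m R) (Q : Matrix n n R) : Prop where
  transpose_eq : Qᵀ = Q
  lyapunov : A * Q * Aᵀ + B * Bᵀ = Q
  cross : A * Q * Cᵀ + B * Dᵀ = 0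
  output : C * Q * Cᵀ + D * Dᵀ = 1

namespace IsAllpassGramian

variable [Fintype m] [DecidableEq m] {A : Matrix n n R} {B : Matrix n m R} {C : Matrix m n R}
  {D : Matrix m m R} {Q : Matrix n n R}

theorem map {S : Type*} [CommRing S] (h : IsAllpassGramian A B C D Q) (f : R →+* S) :
    IsAllpassGramian (A.map f) (B.map f) (C.map f) (D.map f) (Q.map f) where
  transpose_eq := by rw [← transpose_map, h.transpose_eq]
  lyapunov := by
    simpa only [Matrix.map_add _ (map_add f), Matrix.map_mul, transpose_map]
      using congrArg (·.map f) h.lyapunov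
  cross := by
    simpa only [Matrix.map_add _ (map_add f), Matrix.map_mul, transpose_map,
      Matrix.map_zero _ (map_zero f)] using congrArg (·.map f) h.cross
  output := by
    simpa only [Matrix.map_add _ (map_add f), Matrix.map_mul, transpose_map,
      Matrix.map_one _ (map_zero f) (map_one f)] using congrArg (·.map f) h.output

theorem transferMatrix_mul_transpose_transferMatrix [DecidableEq n]
    (h : IsAllpassGramian A B C D Q) {u v : R} (huv : u * v = 1)
    (hu : IsUnit (u • 1 - A).det) (hv : IsUnit (v • 1 - A).det) :
    transferMatrix A B C D u * (transferMatrix A B C D v)ᵀ = 1 := by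
  have hvT : IsUnit (v • 1 - Aᵀ).det := by
    rwa [← transpose_one, ← transpose_smul, ← transpose_sub, det_transpose]
  have hBB : Q - A * Q * Aᵀ = B * Bᵀ := (eq_sub_of_add_eq' h.lyapunov).symm
  have hBD : B * Dᵀ = -(A * Q * Cᵀ) := eq_neg_of_add_eq_zero_right h.cross
  have hDB : D * Bᵀ = -(C * Q * Aᵀ) := by
    simpa only [transpose_mul, transpose_transpose, transpose_neg, h.transpose_eq,
      Matrix.mul_assoc] using congrArg transpose hBD
  have hres := inv_mul_stein_mul_inv huv hu hvT Q
  rw [hBB] at hres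
  rw [transpose_transferMatrix, ← h.output]
  calc _ = C * ((u • 1 - A)⁻¹ * (B * Bᵀ) * (v • 1 - Aᵀ)⁻¹) * Cᵀ
        + C * (u • 1 - A)⁻¹ * (B * Dᵀ) + D * Bᵀ * (v • 1 - Aᵀ)⁻¹ * Cᵀ + D * Dᵀ := by
        simp only [transferMatrix, Matrix.add_mul, Matrix.mul_add, Matrix.mul_assoc]
        abel
    _ = C * Q * Cᵀ + D * Dᵀ := by
        rw [hres, hBD, hDB]
        simp only [Matrix.mul_add, Matrix.add_mul, Matrix.mul_neg, Matrix.neg_mul,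
          Matrix.mul_assoc]
        abel

end IsAllpassGramian

end Matrix

/-- Sufficiency direction of the classical state-space allpass theorem:
if there is a symmetric positive definite `Q` with `A Q Aᵀ + B Bᵀ = Q`,
`A Q Cᵀ + B Dᵀ = 0` and `C Q Cᵀ + D Dᵀ = I`, then the transfer function
`T(z) = C (zI − A)⁻¹ B + D` satisfies `T(z) T(1/z)ᵀ = I`. -/
theorem statespace_allpass_sufficiency {N M : ℕ}
    (A : Matrix (Fin N) (Fin N) ℝ) (B : Matrix (Fin N) (Fin M) ℝ)
    (C : Matrix (Fin M) (Fin N) ℝ) (D : Matrix (Fin M) (Fin M) ℝ)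
    (hQ : ∃ Q : Matrix (Fin N) (Fin N) ℝ, Q.PosDef ∧ Qᵀ = Q ∧
      A * Q * Aᵀ + B * Bᵀ = Q ∧
      A * Q * Cᵀ + B * Dᵀ = 0 ∧
      C * Q * Cᵀ + D * Dᵀ = 1)
    (z : ℂ) (hz : z ≠ 0)
    (h1 : IsUnit (z • (1 : Matrix (Fin N) (Fin N) ℂ) - A.map Complex.ofReal).det)
    (h2 : IsUnit (z⁻¹ • (1 : Matrix (Fin N) (Fin N) ℂ) - A.map Complex.ofReal).det) :
    (C.map Complex.ofReal *
        (z • (1 : Matrix (Fin N) (Fin N) ℂ) - A.map Complex.ofReal)⁻¹ *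
        B.map Complex.ofReal + D.map Complex.ofReal) *
      (C.map Complex.ofReal *
        (z⁻¹ • (1 : Matrix (Fin N) (Fin N) ℂ) - A.map Complex.ofReal)⁻¹ *
        B.map Complex.ofReal + D.map Complex.ofReal)ᵀ = 1 := by
  obtain ⟨Q, -, hsymm, hlyap, hcross, hout⟩ := hQ
  exact ((IsAllpassGramian.mk hsymm hlyap hcross hout).map Complex.ofRealHom)
    |>.transferMatrix_mul_transpose_transferMatrix (mul_inv_cancel₀ hz) h1 h2
end

section
/- Let A be a real N×N matrix, B a real N×M matrix, C a real M×N matrix, D a real M×M matrix, m a delay vector, and E a real invertible diagonal N×N matrix. For every complex z such that P_m(z) = diagonal(z^{m_1},…,z^{m_N}) − A is invertible, the matrix diagonal(z^{m_1},…,z^{m_N}) − E⁻¹AE is also invertible and C E (diagonal(z^{m_1},…,z^{m_N}) − E⁻¹AE)⁻¹ E⁻¹ B + D = C (diagonal(z^{m_1},…,z^{m_N}) − A)⁻¹ B + D. -/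
open Matrix

/-!
Writing `E = diagonal e`, the matrix `diagonal (z ^ m) - E⁻¹ A E` is the conjugate `E⁻¹ P E` of the
loop matrix `P = diagonal (z ^ m) - A`, because diagonal matrices commute. Conjugation preserves the
determinant and inverts to `E⁻¹ P⁻¹ E`, and the outer factors `E` and `E⁻¹` of the transfer
function cancel against it.
-/

namespace Matrix

variable {l n k R : Type*} [Fintype n] [DecidableEq n] [CommRing R]

theorem sub_conj_eq_conj_sub_of_commute {E Δ : Matrix n n R} (hE : IsUnit E) (h : Commute E Δ)
    (A : Matrix n n R) : Δ - E⁻¹ * A * E = E⁻¹ * (Δ - A) * E := by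
  have hΔ : E⁻¹ * Δ * E = Δ := by
    rw [Matrix.mul_assoc, ← h.eq, nonsing_inv_mul_cancel_left E Δ ((isUnit_iff_isUnit_det E).mp hE)]
  rw [Matrix.mul_sub, Matrix.sub_mul, hΔ]

theorem conj_inv {E : Matrix n n R} (hE : IsUnit E) (P : Matrix n n R) :
    (E⁻¹ * P * E)⁻¹ = E⁻¹ * P⁻¹ * E := by
  rw [mul_inv_rev, mul_inv_rev, nonsing_inv_nonsing_inv _ ((isUnit_iff_isUnit_det E).mp hE),
    Matrix.mul_assoc]

theorem mul_mul_conj_inv_mul_mul {E : Matrix n n R} (hE : IsUnit E) (P : Matrix n n R)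
    (C : Matrix l n R) (B : Matrix n k R) :
    C * E * (E⁻¹ * P * E)⁻¹ * E⁻¹ * B = C * P⁻¹ * B := by
  have hE' := (isUnit_iff_isUnit_det E).mp hE
  rw [conj_inv hE, ← Matrix.mul_assoc, ← Matrix.mul_assoc, mul_nonsing_inv_cancel_right E _ hE',
    Matrix.mul_assoc _ E, mul_nonsing_inv _ hE', Matrix.mul_one]

end Matrix

theorem fdn_transfer_diag_similarity_invariant_general {N M : ℕ}
    (A : Matrix (Fin N) (Fin N) ℝ) (B : Matrix (Fin N) (Fin M) ℝ)
    (C : Matrix (Fin M) (Fin N) ℝ) (D : Matrix (Fin M) (Fin M) ℝ)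
    (m : Fin N → ℕ)
    (e : Fin N → ℝ) (he : ∀ i, e i ≠ 0)
    (z : ℂ)
    (hinv : IsUnit (Matrix.diagonal (fun i => z ^ m i) - A.map Complex.ofReal).det) :
    IsUnit (Matrix.diagonal (fun i => z ^ m i)
        - (Matrix.diagonal fun i => (e i : ℂ))⁻¹ * A.map Complex.ofReal *
            Matrix.diagonal (fun i => (e i : ℂ))).det ∧
    C.map Complex.ofReal * Matrix.diagonal (fun i => (e i : ℂ)) *
        (Matrix.diagonal (fun i => z ^ m i)
          - (Matrix.diagonal fun i => (e i : ℂ))⁻¹ * A.map Complex.ofReal *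
              Matrix.diagonal (fun i => (e i : ℂ)))⁻¹ *
        (Matrix.diagonal fun i => (e i : ℂ))⁻¹ * B.map Complex.ofReal
        + D.map Complex.ofReal
      = C.map Complex.ofReal *
          (Matrix.diagonal (fun i => z ^ m i) - A.map Complex.ofReal)⁻¹ *
          B.map Complex.ofReal + D.map Complex.ofReal := by
  have hE : IsUnit (diagonal fun i => (e i : ℂ)) :=
    isUnit_diagonal.mpr (Pi.isUnit_iff.mpr fun i => (Complex.ofReal_ne_zero.mpr (he i)).isUnit)
  rw [sub_conj_eq_conj_sub_of_commute hE (commute_diagonal _ _), det_conj' hE,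
    mul_mul_conj_inv_mul_mul hE]
  exact ⟨hinv, rfl⟩

/-- Diagonal-similarity invariance of the FDN transfer function:
for an invertible real diagonal matrix `E = diagonal e`, whenever the loop matrix
`P_m(z) = diagonal(z^{m_i}) − A` is invertible, so is `diagonal(z^{m_i}) − E⁻¹AE`,
and `C E (diagonal(z^{m_i}) − E⁻¹AE)⁻¹ E⁻¹ B + D = C (diagonal(z^{m_i}) − A)⁻¹ B + D`. -/
theorem fdn_transfer_diag_similarity_invariant {N M : ℕ}
    (A : Matrix (Fin N) (Fin N) ℝ) (B : Matrix (Fin N) (Fin M) ℝ)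
    (C : Matrix (Fin M) (Fin N) ℝ) (D : Matrix (Fin M) (Fin M) ℝ)
    (m : Fin N → ℕ) (hm : ∀ i, 1 ≤ m i)
    (e : Fin N → ℝ) (he : ∀ i, e i ≠ 0)
    (z : ℂ)
    (hinv : IsUnit (Matrix.diagonal (fun i => z ^ m i) - A.map Complex.ofReal).det) :
    IsUnit (Matrix.diagonal (fun i => z ^ m i)
        - (Matrix.diagonal fun i => (e i : ℂ))⁻¹ * A.map Complex.ofReal *
            Matrix.diagonal (fun i => (e i : ℂ))).det ∧
    C.map Complex.ofReal * Matrix.diagonal (fun i => (e i : ℂ)) *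
        (Matrix.diagonal (fun i => z ^ m i)
          - (Matrix.diagonal fun i => (e i : ℂ))⁻¹ * A.map Complex.ofReal *
              Matrix.diagonal (fun i => (e i : ℂ)))⁻¹ *
        (Matrix.diagonal fun i => (e i : ℂ))⁻¹ * B.map Complex.ofReal
        + D.map Complex.ofReal
      = C.map Complex.ofReal *
          (Matrix.diagonal (fun i => z ^ m i) - A.map Complex.ofReal)⁻¹ *
          B.map Complex.ofReal + D.map Complex.ofReal :=
  fdn_transfer_diag_similarity_invariant_general A B C D m e he z hinv
end

section
/- Let A be a real N×N matrix and m a delay vector. Suppose there exists a real invertible diagonal N×N matrix E such that the ℓ²-operator norm of E⁻¹ A E is strictly less than 1. Then every complex number z with det(diagonal(z^{m_1},…,z^{m_N}) − A) = 0 satisfies |z| < 1. -/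
/-!
Let `E = diagonal e` and `B = E⁻¹ A E`. A root `z` of `det(diagonal(z^{m_i}) − A)` comes with a
nonzero complex `y` such that `A y = D y` for `D = diagonal(z^{m_i})`; since diagonal matrices
commute, `u = E⁻¹ y` satisfies `B u = D u`. Splitting `u` into real and imaginary parts shows that
the real matrix `B` acts on `ℂⁿ` with ℓ²-norm at most `‖B‖ < 1`. If `‖z‖ ≥ 1` then `D` does not
shrink `u`, so `‖u‖ ≤ ‖D u‖ = ‖B u‖ < ‖u‖`, which is absurd.
-/

open Matrix

variable {n : Type*} [Fintype n]

namespace Matrix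

theorem re_mulVec_map_ofReal (B : Matrix n n ℝ) (u : n → ℂ) :
    (fun i => ((B.map Complex.ofReal *ᵥ u) i).re) = B *ᵥ fun i => (u i).re := by
  ext i
  simp [mulVec, dotProduct, Complex.re_sum]

theorem im_mulVec_map_ofReal (B : Matrix n n ℝ) (u : n → ℂ) :
    (fun i => ((B.map Complex.ofReal *ᵥ u) i).im) = B *ᵥ fun i => (u i).im := by
  ext i
  simp [mulVec, dotProduct, Complex.im_sum]

end Matrix

theorem EuclideanSpace.norm_toLp_sq_eq_re_add_im (u : n → ℂ) :
    ‖WithLp.toLp 2 u‖ ^ 2 =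
      ‖WithLp.toLp 2 fun i => (u i).re‖ ^ 2 + ‖WithLp.toLp 2 fun i => (u i).im‖ ^ 2 := by
  simp [EuclideanSpace.norm_sq_eq, Complex.sq_norm, Complex.normSq_apply, ← sq,
    Finset.sum_add_distrib]

variable [DecidableEq n]

theorem EuclideanSpace.norm_toLp_le_norm_toLp_diagonal_mulVec {𝕜 : Type*} [RCLike 𝕜]
    {d : n → 𝕜} (hd : ∀ i, 1 ≤ ‖d i‖) (u : n → 𝕜) :
    ‖WithLp.toLp 2 u‖ ≤ ‖WithLp.toLp 2 (diagonal d *ᵥ u)‖ := by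
  simp only [EuclideanSpace.norm_eq, mulVec_diagonal, norm_mul]
  gcongr with i
  exact le_mul_of_one_le_left (norm_nonneg _) (hd i)

namespace Matrix

theorem mulVec_conj_of_mulVec_eq {R : Type*} [CommRing R] {A D P Q : Matrix n n R} {y : n → R}
    (hPQ : P * Q = 1) (hQD : Commute Q D) (hy : A *ᵥ y = D *ᵥ y) :
    (Q * A * P) *ᵥ (Q *ᵥ y) = D *ᵥ (Q *ᵥ y) := by
  rw [mulVec_mulVec, mulVec_mulVec, Matrix.mul_assoc, Matrix.mul_assoc, hPQ, Matrix.mul_one,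
    ← mulVec_mulVec, hy, mulVec_mulVec, hQD.eq]

theorem map_ofReal_diagonal_inv_mul_mul_diagonal {e : n → ℝ} (he : ∀ i, e i ≠ 0)
    (A : Matrix n n ℝ) :
    ((diagonal e)⁻¹ * A * diagonal e).map Complex.ofReal =
      diagonal (fun i => (e i : ℂ)⁻¹) * A.map Complex.ofReal * diagonal (fun i => (e i : ℂ)) := by
  have hinv : (diagonal e)⁻¹ = diagonal e⁻¹ :=
    inv_eq_left_inv (by simp [diagonal_mul_diagonal, he, ← diagonal_one])
  ext i j
  simp [hinv, diagonal_mul, mul_diagonal]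

theorem norm_toEuclideanCLM_map_ofReal_le (B : Matrix n n ℝ) :
    ‖toEuclideanCLM (𝕜 := ℂ) (B.map Complex.ofReal)‖ ≤ ‖toEuclideanCLM (𝕜 := ℝ) B‖ := by
  set c := ‖toEuclideanCLM (𝕜 := ℝ) B‖
  have hB (v : n → ℝ) : ‖WithLp.toLp 2 (B *ᵥ v)‖ ≤ c * ‖WithLp.toLp 2 v‖ := by
    simpa only [toEuclideanCLM_toLp] using (toEuclideanCLM (𝕜 := ℝ) B).le_opNorm (WithLp.toLp 2 v)
  refine ContinuousLinearMap.opNorm_le_bound _ (norm_nonneg _) fun x => ?_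
  obtain ⟨u⟩ := x
  rw [toEuclideanCLM_toLp, ← pow_le_pow_iff_left₀ (norm_nonneg _) (by positivity) two_ne_zero]
  calc ‖WithLp.toLp 2 (B.map Complex.ofReal *ᵥ u)‖ ^ 2
      = ‖WithLp.toLp 2 (B *ᵥ fun i => (u i).re)‖ ^ 2
          + ‖WithLp.toLp 2 (B *ᵥ fun i => (u i).im)‖ ^ 2 := by
        rw [EuclideanSpace.norm_toLp_sq_eq_re_add_im, re_mulVec_map_ofReal, im_mulVec_map_ofReal]
    _ ≤ (c * ‖WithLp.toLp 2 fun i => (u i).re‖) ^ 2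
          + (c * ‖WithLp.toLp 2 fun i => (u i).im‖) ^ 2 := by
        gcongr <;> exact hB _
    _ = (c * ‖WithLp.toLp 2 u‖) ^ 2 := by
        rw [mul_pow, mul_pow, mul_pow, EuclideanSpace.norm_toLp_sq_eq_re_add_im, mul_add]

end Matrix

theorem fdn_stable_of_diag_similar_contraction_general {N : ℕ}
    (A : Matrix (Fin N) (Fin N) ℝ)
    (m : Fin N → ℕ)
    (h : ∃ e : Fin N → ℝ, (∀ i, e i ≠ 0) ∧
      ‖Matrix.toEuclideanCLM (𝕜 := ℝ)
          ((Matrix.diagonal e)⁻¹ * A * Matrix.diagonal e)‖ < 1) :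
    ∀ z : ℂ,
      (Matrix.diagonal (fun i => z ^ m i) - A.map Complex.ofReal).det = 0 →
      ‖z‖ < 1 := by
  obtain ⟨e, he, hc⟩ := h
  intro z hz
  by_contra! hz1
  obtain ⟨y, hy0, hy⟩ := exists_mulVec_eq_zero_iff.2 hz
  set P := diagonal fun i => (e i : ℂ)
  set Q := diagonal fun i => (e i : ℂ)⁻¹
  have hPQ : P * Q = 1 := by
    rw [diagonal_mul_diagonal, ← diagonal_one]
    exact congrArg diagonal (funext fun i => mul_inv_cancel₀ (by exact_mod_cast he i))
  set u := Q *ᵥ y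
  have hu : (Q * A.map Complex.ofReal * P) *ᵥ u = diagonal (fun i => z ^ m i) *ᵥ u :=
    mulVec_conj_of_mulVec_eq hPQ (commute_diagonal _ _) <| by
      rwa [sub_mulVec, sub_eq_zero, eq_comm] at hy
  have hu0 : u ≠ 0 := fun h0 => hy0 <| by
    simpa [u, mulVec_mulVec, hPQ] using congrArg (P *ᵥ ·) h0
  have key : ‖WithLp.toLp 2 u‖ < ‖WithLp.toLp 2 u‖ :=
    calc ‖WithLp.toLp 2 u‖ ≤ ‖WithLp.toLp 2 (diagonal (fun i => z ^ m i) *ᵥ u)‖ :=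
          EuclideanSpace.norm_toLp_le_norm_toLp_diagonal_mulVec
            (fun i => by simpa using one_le_pow₀ (n := m i) hz1) u
      _ = ‖toEuclideanCLM (𝕜 := ℂ) (((diagonal e)⁻¹ * A * diagonal e).map Complex.ofReal)
            (WithLp.toLp 2 u)‖ := by
          rw [toEuclideanCLM_toLp, map_ofReal_diagonal_inv_mul_mul_diagonal he, hu]
      _ ≤ ‖toEuclideanCLM (𝕜 := ℝ) ((diagonal e)⁻¹ * A * diagonal e)‖ * ‖WithLp.toLp 2 u‖ :=
          (ContinuousLinearMap.le_opNorm _ _).trans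
            (mul_le_mul_of_nonneg_right (norm_toEuclideanCLM_map_ofReal_le _) (norm_nonneg _))
      _ < ‖WithLp.toLp 2 u‖ := mul_lt_of_lt_one_left (norm_pos_iff.2 (by simpa using hu0)) hc
  exact lt_irrefl _ key

/-- FDN stability: if some diagonal similarity of the feedback matrix `A` has
ℓ²-operator norm below one, then all roots of the generalized characteristic
polynomial `det(diagonal(z^{m_i}) − A)` lie in the open unit disc. -/
theorem fdn_stable_of_diag_similar_contraction {N : ℕ}
    (A : Matrix (Fin N) (Fin N) ℝ)
    (m : Fin N → ℕ) (hm : ∀ i, 1 ≤ m i)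
    (h : ∃ e : Fin N → ℝ, (∀ i, e i ≠ 0) ∧
      ‖Matrix.toEuclideanCLM (𝕜 := ℝ)
          ((Matrix.diagonal e)⁻¹ * A * Matrix.diagonal e)‖ < 1) :
    ∀ z : ℂ,
      (Matrix.diagonal (fun i => z ^ m i) - A.map Complex.ofReal).det = 0 →
      ‖z‖ < 1 :=
  fdn_stable_of_diag_similar_contraction_general A m h
end

section
/- Let A be a real N×N matrix, B a real N×M matrix, C a real M×N matrix, and D a real M×M matrix. Suppose there exists a diagonal positive definite real N×N matrix Q such that A Q Aᵀ + B Bᵀ = Q, A Q Cᵀ + B Dᵀ = 0, and C Q Cᵀ + D Dᵀ = I. Let E be the diagonal matrix whose i-th diagonal entry is the positive square root of the i-th diagonal entry of Q. Then the (N+M)×(N+M) block matrix S̃ = [[E⁻¹AE, E⁻¹B],[CE, D]] is orthogonal, i.e., S̃ S̃ᵀ = I. -/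
/-!
Writing `S = [[A, B], [C, D]]` and `P = diag(Q, I)`, the uniallpass condition says exactly
`S P Sᵀ = P`. With `T = diag(E, I)` we have `P = T Tᵀ` and `S̃ = T⁻¹ S T`, so
`S̃ S̃ᵀ = T⁻¹ (S T Tᵀ Sᵀ) T⁻ᵀ = T⁻¹ T Tᵀ T⁻ᵀ = I`.
-/

open Matrix

namespace Matrix

variable {n k R : Type*} [Fintype n] [Fintype k] [DecidableEq k] [CommSemiring R]

theorem mul_mul_mul_transpose_eq_one_of_mul_eq_one {S : Matrix n n R} {T : Matrix n k R}
    {T' : Matrix k n R} (hT : T' * T = 1) (hS : S * (T * Tᵀ) * Sᵀ = T * Tᵀ) :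
    T' * S * T * (T' * S * T)ᵀ = 1 :=
  calc T' * S * T * (T' * S * T)ᵀ = T' * (S * (T * Tᵀ) * Sᵀ) * T'ᵀ := by
        simp only [transpose_mul, Matrix.mul_assoc]
    _ = (T' * T) * (T' * T)ᵀ := by
        rw [hS, transpose_mul, Matrix.mul_assoc, Matrix.mul_assoc, Matrix.mul_assoc]
    _ = 1 := by rw [hT, transpose_one, Matrix.mul_one]

end Matrix

section Uniallpass

variable {n m R : Type*} [Fintype n] [Fintype m] [DecidableEq m] [CommSemiring R]
  {A : Matrix n n R} {B : Matrix n m R} {C : Matrix m n R} {D : Matrix m m R}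
  {Q : Matrix n n R}

theorem fromBlocks_mul_mul_transpose_eq_of_uniallpass (hQ : Qᵀ = Q)
    (h1 : A * Q * Aᵀ + B * Bᵀ = Q) (h2 : A * Q * Cᵀ + B * Dᵀ = 0)
    (h3 : C * Q * Cᵀ + D * Dᵀ = 1) :
    fromBlocks A B C D * fromBlocks Q 0 0 1 * (fromBlocks A B C D)ᵀ = fromBlocks Q 0 0 1 := by
  have h2' : C * Q * Aᵀ + D * Bᵀ = 0 := by
    simpa only [transpose_add, transpose_mul, transpose_transpose, hQ, transpose_zero,
      Matrix.mul_assoc] using congrArg transpose h2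
  simp only [fromBlocks_transpose, fromBlocks_multiply, Matrix.mul_zero,
    Matrix.mul_one, add_zero, zero_add]
  rw [h1, h2, h2', h3]

end Uniallpass

theorem diagonal_sqrt_mul_transpose {n : Type*} [Fintype n] [DecidableEq n] {q : n → ℝ}
    (hq : ∀ i, 0 ≤ q i) :
    (diagonal fun i => √(q i)) * (diagonal fun i => √(q i))ᵀ = diagonal q := by
  rw [diagonal_transpose, diagonal_mul_diagonal]
  exact congrArg diagonal (funext fun i => Real.mul_self_sqrt (hq i))

/-- Balanced form: if `(A,B,C,D)` satisfies the uniallpass condition with a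
diagonal positive definite `Q = diagonal q`, and `E = diagonal (√(q i))`, then the
block matrix `[[E⁻¹AE, E⁻¹B],[CE, D]]` is orthogonal. -/
theorem uniallpass_balanced_form {N M : ℕ}
    (A : Matrix (Fin N) (Fin N) ℝ) (B : Matrix (Fin N) (Fin M) ℝ)
    (C : Matrix (Fin M) (Fin N) ℝ) (D : Matrix (Fin M) (Fin M) ℝ)
    (q : Fin N → ℝ) (hQ : (Matrix.diagonal q).PosDef)
    (h1 : A * Matrix.diagonal q * Aᵀ + B * Bᵀ = Matrix.diagonal q)
    (h2 : A * Matrix.diagonal q * Cᵀ + B * Dᵀ = 0)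
    (h3 : C * Matrix.diagonal q * Cᵀ + D * Dᵀ = 1) :
    (Matrix.fromBlocks
        ((Matrix.diagonal fun i => Real.sqrt (q i))⁻¹ * A *
          Matrix.diagonal fun i => Real.sqrt (q i))
        ((Matrix.diagonal fun i => Real.sqrt (q i))⁻¹ * B)
        (C * Matrix.diagonal fun i => Real.sqrt (q i))
        D) *
      (Matrix.fromBlocks
        ((Matrix.diagonal fun i => Real.sqrt (q i))⁻¹ * A *
          Matrix.diagonal fun i => Real.sqrt (q i))
        ((Matrix.diagonal fun i => Real.sqrt (q i))⁻¹ * B)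
        (C * Matrix.diagonal fun i => Real.sqrt (q i))
        D)ᵀ = 1 := by
  have hq : ∀ i, 0 < q i := posDef_diagonal_iff.mp hQ
  set E : Matrix (Fin N) (Fin N) ℝ := diagonal fun i => √(q i)
  have hE : IsUnit E :=
    isUnit_diagonal.mpr (Pi.isUnit_iff.mpr fun i => (Real.sqrt_pos.mpr (hq i)).ne'.isUnit)
  have hT : fromBlocks E⁻¹ 0 0 1 * fromBlocks E 0 0 (1 : Matrix (Fin M) (Fin M) ℝ) = 1 := by
    rw [fromBlocks_multiply, nonsing_inv_mul _ ((isUnit_iff_isUnit_det E).mp hE)]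
    simp
  have hTT : fromBlocks E 0 0 1 * (fromBlocks E 0 0 (1 : Matrix (Fin M) (Fin M) ℝ))ᵀ =
      fromBlocks (diagonal q) 0 0 1 := by
    rw [fromBlocks_transpose, fromBlocks_multiply, diagonal_sqrt_mul_transpose fun i => (hq i).le]
    simp
  have hconj : fromBlocks E⁻¹ 0 0 1 * fromBlocks A B C D * fromBlocks E 0 0 1 =
      fromBlocks (E⁻¹ * A * E) (E⁻¹ * B) (C * E) D := by
    simp [fromBlocks_multiply]
  rw [← hconj]
  refine mul_mul_mul_transpose_eq_one_of_mul_eq_one hT ?_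
  rw [hTT]
  exact fromBlocks_mul_mul_transpose_eq_of_uniallpass (diagonal_transpose q) h1 h2 h3
end

section
/- Let A be a real N×N matrix, B a real N×M matrix, C a real M×N matrix, and D a real M×M matrix, and suppose there exists a diagonal positive definite real N×N matrix Q such that A Q Aᵀ + B Bᵀ = Q, A Q Cᵀ + B Dᵀ = 0, and C Q Cᵀ + D Dᵀ = I. Let S be the (N+M)×(N+M) block matrix [[A,B],[C,D]]. Then det S equals 1 or −1, and det D = (det S) · (det A). -/
/-!
With `P = fromBlocks Q 0 0 1`, the uniallpass condition says exactly `S * P * Sᵀ = P`; taking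
determinants, `(det S)² = 1` since `det P = det Q > 0`. Right-multiplying `S` by the block
upper-triangular `fromBlocks 1 (Q * Cᵀ) 0 Dᵀ` yields the block lower-triangular
`fromBlocks A 0 C 1`, whence `det S * det D = det A`; multiply by `det S`.
-/

open Matrix

namespace Matrix

variable {R m n : Type*} [Fintype m] [Fintype n]

theorem fromBlocks_mul_fromBlocks_mul_transpose_of_uniallpass [DecidableEq n] [CommRing R]
    {A : Matrix m m R} {B : Matrix m n R} {C : Matrix n m R} {D : Matrix n n R}
    {Q : Matrix m m R} (hQ : Qᵀ = Q)
    (h₁ : A * Q * Aᵀ + B * Bᵀ = Q) (h₂ : A * Q * Cᵀ + B * Dᵀ = 0)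
    (h₃ : C * Q * Cᵀ + D * Dᵀ = 1) :
    fromBlocks A B C D * fromBlocks Q 0 0 1 * (fromBlocks A B C D)ᵀ = fromBlocks Q 0 0 1 := by
  have h₂' : C * Q * Aᵀ + D * Bᵀ = 0 := by
    simpa [transpose_add, transpose_mul, hQ, Matrix.mul_assoc] using congrArg transpose h₂
  rw [fromBlocks_transpose, fromBlocks_multiply, fromBlocks_multiply]
  simp only [Matrix.mul_zero, Matrix.mul_one, add_zero, zero_add]
  rw [h₁, h₂, h₂', h₃]

theorem det_eq_one_or_neg_one_of_mul_mul_transpose_eq [DecidableEq m] [CommRing R] [IsDomain R]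
    {S P : Matrix m m R} (hP : P.det ≠ 0) (h : S * P * Sᵀ = P) :
    S.det = 1 ∨ S.det = -1 := by
  have hdet := congrArg det h
  rw [det_mul, det_mul, det_transpose] at hdet
  refine mul_self_eq_one_iff.mp (mul_right_cancel₀ hP ?_)
  linear_combination hdet

theorem det_fromBlocks_mul_det_eq_det [DecidableEq m] [DecidableEq n] [CommRing R]
    {A : Matrix m m R} {B : Matrix m n R} {C : Matrix n m R} {D : Matrix n n R}
    {X : Matrix m n R} {Y : Matrix n n R} (hX : A * X + B * Y = 0) (hY : C * X + D * Y = 1) :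
    (fromBlocks A B C D).det * Y.det = A.det := by
  have h : fromBlocks A B C D * fromBlocks 1 X 0 Y = fromBlocks A 0 C 1 := by
    rw [fromBlocks_multiply]
    simp [hX, hY]
  simpa [det_fromBlocks_zero₂₁, det_fromBlocks_zero₁₂] using congrArg det h

end Matrix

/-- For a uniallpass FDN (uniallpass condition with diagonal positive definite `Q`),
the system matrix `S = [[A,B],[C,D]]` has determinant `±1` and
`det D = det S · det A`. -/
theorem uniallpass_det_system_matrix {N M : ℕ}
    (A : Matrix (Fin N) (Fin N) ℝ) (B : Matrix (Fin N) (Fin M) ℝ)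
    (C : Matrix (Fin M) (Fin N) ℝ) (D : Matrix (Fin M) (Fin M) ℝ)
    (hQ : ∃ q : Fin N → ℝ, (Matrix.diagonal q).PosDef ∧
      A * Matrix.diagonal q * Aᵀ + B * Bᵀ = Matrix.diagonal q ∧
      A * Matrix.diagonal q * Cᵀ + B * Dᵀ = 0 ∧
      C * Matrix.diagonal q * Cᵀ + D * Dᵀ = 1) :
    ((Matrix.fromBlocks A B C D).det = 1 ∨ (Matrix.fromBlocks A B C D).det = -1) ∧
    D.det = (Matrix.fromBlocks A B C D).det * A.det := by
  obtain ⟨q, hpd, h₁, h₂, h₃⟩ := hQ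
  have hP : (fromBlocks (diagonal q) 0 0 (1 : Matrix (Fin M) (Fin M) ℝ)).det ≠ 0 := by
    simpa [det_fromBlocks_zero₂₁] using hpd.det_pos.ne'
  have hS := det_eq_one_or_neg_one_of_mul_mul_transpose_eq hP
    (fromBlocks_mul_fromBlocks_mul_transpose_of_uniallpass (diagonal_transpose q) h₁ h₂ h₃)
  have hSD : (fromBlocks A B C D).det * D.det = A.det := by
    simpa using det_fromBlocks_mul_det_eq_det (X := diagonal q * Cᵀ) (Y := Dᵀ)
      (by rwa [← Matrix.mul_assoc]) (by rwa [← Matrix.mul_assoc])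
  refine ⟨hS, ?_⟩
  rcases hS with hS | hS <;> rw [← hSD, hS] <;> ring
end

section
/- Let A be an invertible real N×N matrix, b, c ∈ ℝ^N, d a nonzero real number, and set A_S = A − d⁻¹ b cᵀ. Suppose there exists a ∈ {1, −1} such that det(A_S[S]) = a · det((A⁻¹)[S]) for every subset S ⊆ {1,…,N}. Then for every delay vector m and every nonzero complex z: (det A) · det(diagonal(z^{m_1},…,z^{m_N}) − A_S) = a · (−1)^N · z^{m_1+⋯+m_N} · det(diagonal(z^{−m_1},…,z^{−m_N}) − A). -/
/-!
Expanding `det (diagonal v - M)` multilinearly in the rows gives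
`∑_S (∏_{i ∉ S} v i) (-1)^|S| det M[S]`, so it depends on `M` only through its principal
minors; hence `det (D - A_S) = a · det (D - A⁻¹)` for `D = diagonal (z ^ m i)`. The reversal
then comes from the factorisation `D - A⁻¹ = -(A⁻¹ (D⁻¹ - A) D)`, which gives
`det A · det (D - A⁻¹) = (-1)^N det D · det (D⁻¹ - A)`.
-/

open Matrix

noncomputable def principalMinor {N : ℕ} (A : Matrix (Fin N) (Fin N) ℝ)
    (s : Finset (Fin N)) : ℝ :=
  (A.submatrix (fun i : {x // x ∈ s} => (i : Fin N))
    (fun i : {x // x ∈ s} => (i : Fin N))).det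

namespace Matrix

variable {n : Type*} [Fintype n] [DecidableEq n]

section CommRing

variable {R : Type*} [CommRing R]

theorem det_piecewise_diagonal (M : Matrix n n R) (v : n → R) (s : Finset n) :
    det (s.piecewise M (diagonal v) : Matrix n n R)
      = (∏ i ∈ sᶜ, v i) * (M.submatrix ((↑) : s → n) (↑)).det := by
  let X : Matrix n n R := s.piecewise M (diagonal v)
  let e := Equiv.sumCompl (· ∈ s)
  have hblocks : X.submatrix e e
      = fromBlocks (M.submatrix (↑) (↑)) (M.submatrix (↑) ((↑) : {x // x ∉ s} → n))
          0 (diagonal fun i : {x // x ∉ s} => v i) := by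
    ext (i | i) (j | j) <;> rw [submatrix_apply] <;>
      simp [X, e, Finset.piecewise, diagonal_apply, Subtype.ext_iff, i.2]
    exact fun h => absurd (h ▸ j.2) i.2
  change det X = _
  rw [← det_submatrix_equiv_self e, hblocks, det_fromBlocks_zero₂₁, det_diagonal, mul_comm,
    Finset.prod_subtype sᶜ (fun _ => Finset.mem_compl)]

theorem det_add_diagonal_eq_sum (M : Matrix n n R) (v : n → R) :
    (M + diagonal v).det
      = ∑ s : Finset n, (∏ i ∈ sᶜ, v i) * (M.submatrix ((↑) : s → n) (↑)).det := by
  simp only [← det_piecewise_diagonal]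
  exact (detRowAlternating (R := R) (n := n)).toMultilinearMap.map_add_univ M (diagonal v)

theorem det_diagonal_sub_eq_sum (M : Matrix n n R) (v : n → R) :
    (diagonal v - M).det = ∑ s : Finset n,
      (∏ i ∈ sᶜ, v i) * ((-1) ^ s.card * (M.submatrix ((↑) : s → n) (↑)).det) := by
  rw [sub_eq_neg_add, det_add_diagonal_eq_sum]
  refine Finset.sum_congr rfl fun s _ => ?_
  rw [← Fintype.card_coe s, ← det_neg]
  rfl

theorem det_diagonal_sub_eq_of_principal_minors {M M' : Matrix n n R} {a : R}
    (h : ∀ s : Finset n, (M.submatrix ((↑) : s → n) (↑)).det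
      = a * (M'.submatrix ((↑) : s → n) (↑)).det) (v : n → R) :
    (diagonal v - M).det = a * (diagonal v - M').det := by
  simp only [det_diagonal_sub_eq_sum, h, Finset.mul_sum]
  exact Finset.sum_congr rfl fun s _ => by ring

end CommRing

theorem det_mul_det_diagonal_sub_eq_of_mul_eq_one {K : Type*} [Field K] {A B : Matrix n n K}
    (hAB : A * B = 1) {w : n → K} (hw : ∀ i, w i ≠ 0) :
    A.det * (diagonal w - B).det
      = (-1) ^ Fintype.card n * (∏ i, w i) * (diagonal w⁻¹ - A).det := by
  have hBA : B * A = 1 := mul_eq_one_comm.mp hAB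
  have hww : diagonal w⁻¹ * diagonal w = 1 := by
    rw [diagonal_mul_diagonal, ← diagonal_one]
    exact congrArg diagonal (funext fun i => inv_mul_cancel₀ (hw i))
  have hfactor : diagonal w - B = -(B * (diagonal w⁻¹ - A) * diagonal w) := by
    rw [mul_sub, sub_mul, mul_assoc, hww, hBA, mul_one, one_mul, neg_sub]
  have hdet : A.det * B.det = 1 := by rw [← det_mul, hAB, det_one]
  rw [hfactor, det_neg, det_mul, det_mul, det_diagonal]
  linear_combination ((-1) ^ Fintype.card n * (∏ i, w i) * (diagonal w⁻¹ - A).det) * hdet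

end Matrix

theorem gcp_reversed_of_principal_minors_general {N : ℕ}
    (A : Matrix (Fin N) (Fin N) ℝ) (hA : IsUnit A.det)
    (b c : Fin N → ℝ) (d : ℝ)
    (a : ℝ)
    (hpm : ∀ s : Finset (Fin N),
      principalMinor (A - d⁻¹ • Matrix.vecMulVec b c) s = a * principalMinor A⁻¹ s)
    (m : Fin N → ℕ) (z : ℂ) (hz : z ≠ 0) :
    (A.det : ℂ) *
        (Matrix.diagonal (fun i => z ^ m i)
          - (A - d⁻¹ • Matrix.vecMulVec b c).map Complex.ofReal).det
      = (a : ℂ) * (-1) ^ N * z ^ (∑ i, m i) *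
        (Matrix.diagonal (fun i => z ^ (-(m i : ℤ)))
          - A.map Complex.ofReal).det := by
  have hminors : ∀ s : Finset (Fin N),
      ((A - d⁻¹ • vecMulVec b c).map Complex.ofReal
        |>.submatrix ((↑) : s → Fin N) (↑)).det
        = a * ((A⁻¹.map Complex.ofReal).submatrix ((↑) : s → Fin N) (↑)).det := by
    intro s
    have hcast : ∀ X : Matrix (Fin N) (Fin N) ℝ,
        ((X.map Complex.ofReal).submatrix ((↑) : s → Fin N) (↑)).det = principalMinor X s :=
      fun X => (RingHom.map_det Complex.ofRealHom _).symm
    rw [hcast, hcast, hpm, Complex.ofReal_mul]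
  have hinv : A.map Complex.ofReal * A⁻¹.map Complex.ofReal = 1 := by
    have h := congrArg Complex.ofRealHom.mapMatrix (mul_nonsing_inv A hA)
    rwa [map_mul, map_one] at h
  have hdet : (A.det : ℂ) = (A.map Complex.ofReal).det := RingHom.map_det Complex.ofRealHom A
  have hdiag : (fun i => z ^ (-(m i : ℤ))) = (fun i => z ^ m i)⁻¹ := by
    ext i; simp [_root_.zpow_neg]
  rw [det_diagonal_sub_eq_of_principal_minors hminors, mul_left_comm, hdet,
    det_mul_det_diagonal_sub_eq_of_mul_eq_one hinv (fun i => pow_ne_zero (m i) hz), hdiag,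
    Finset.prod_pow_eq_pow_sum, Fintype.card_fin]
  ring

/-- If the principal minors of `A_S = A − d⁻¹ b cᵀ` match those of `A⁻¹` up to a
common sign `a = ±1`, then for every delay vector `m` and nonzero `z`,
`det A · det(diagonal(z^{m_i}) − A_S) = a (−1)^N z^{Σ m_i} det(diagonal(z^{−m_i}) − A)`. -/
theorem gcp_reversed_of_principal_minors {N : ℕ}
    (A : Matrix (Fin N) (Fin N) ℝ) (hA : IsUnit A.det)
    (b c : Fin N → ℝ) (d : ℝ) (hd : d ≠ 0)
    (a : ℝ) (ha : a = 1 ∨ a = -1)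
    (hpm : ∀ s : Finset (Fin N),
      principalMinor (A - d⁻¹ • Matrix.vecMulVec b c) s = a * principalMinor A⁻¹ s)
    (m : Fin N → ℕ) (hm : ∀ i, 1 ≤ m i) (z : ℂ) (hz : z ≠ 0) :
    (A.det : ℂ) *
        (Matrix.diagonal (fun i => z ^ m i)
          - (A - d⁻¹ • Matrix.vecMulVec b c).map Complex.ofReal).det
      = (a : ℂ) * (-1) ^ N * z ^ (∑ i, m i) *
        (Matrix.diagonal (fun i => z ^ (-(m i : ℤ)))
          - A.map Complex.ofReal).det :=
  gcp_reversed_of_principal_minors_general A hA b c d a hpm m z hz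
end

section
/- Let A be an invertible real N×N matrix, b, c ∈ ℝ^N, and d a real number with d = det A or d = −det A (in particular d ≠ 0). Set A_S = A − d⁻¹ b cᵀ and suppose there exists a ∈ {1, −1} such that det(A_S[S]) = a · det((A⁻¹)[S]) for every subset S ⊆ {1,…,N}. Then for every delay vector m and every complex z with |z| = 1 and det(diagonal(z^{m_1},…,z^{m_N}) − A) ≠ 0, the scalar transfer function satisfies |cᵀ (diagonal(z^{m_1},…,z^{m_N}) − A)⁻¹ b + d| = 1. -/
open Matrix

/-!
Write `D = diagonal (z ^ m i)` and `A_S = A - d⁻¹ b cᵀ`. By the matrix determinant lemma,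
`(cᵀ (D - A)⁻¹ b + d) det (D - A) = d det (D - A_S)`. Expanding `det (D - M)` in the principal
minors of `M`, the hypothesis turns `det (D - A_S)` into `a det (D - A⁻¹)`. Finally
`(D - A⁻¹) A = -D (D̄ - A)` because `D D̄ = 1` on the unit circle, and `D̄ - A` is the complex
conjugate of `D - A` because `A` is real; hence `|det (D - A⁻¹)| |det A| = |det (D - A)|`, and
`|det A| = |d|` leaves `|cᵀ (D - A)⁻¹ b + d| = 1`.
-/

open Finset ComplexConjugate

theorem Complex.ofReal_det {n : Type*} [Fintype n] [DecidableEq n] (X : Matrix n n ℝ) :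
    (X.det : ℂ) = (X.map Complex.ofReal).det :=
  ofRealHom.map_det X

namespace Matrix

variable {n R K : Type*} [Fintype n] [DecidableEq n] [CommRing R] [Field K]

theorem det_diagonal_sub_eq_sum_submatrix_det (x : n → R) (M : Matrix n n R) :
    (diagonal x - M).det =
      ∑ s : Finset n, (-1) ^ #s * (∏ i ∈ sᶜ, x i) * (M.submatrix ((↑) : s → n) (↑)).det := by
  have hrows : diagonal x - M = (fun i => (-M) i) + fun i => diagonal x i := by
    ext i j; simp [sub_eq_neg_add]
  change detRowAlternating (diagonal x - M) = _
  rw [hrows, detRowAlternating.map_add_univ]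
  refine sum_congr rfl fun s _ => ?_
  have hpiece : s.piecewise (fun i => (-M) i) (fun i => diagonal x i) =
      fun i => (if i ∈ s then -1 else x i) • s.piecewise M.row (1 : Matrix n n R).row i := by
    ext i j
    by_cases hi : i ∈ s <;> simp [hi, diagonal_apply, one_apply]
  rw [hpiece, detRowAlternating.map_smul_univ, smul_eq_mul]
  change _ * det (of (s.piecewise M.row (1 : Matrix n n R).row)) = _
  rw [det_piecewise_one_eq_submatrix_det, prod_ite]
  simp [filter_not, compl_eq_univ_sdiff]

theorem det_diagonal_sub_eq_mul_of_submatrix_det_eq {M M' : Matrix n n R} {a : R}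
    (h : ∀ s : Finset n,
      (M.submatrix ((↑) : s → n) (↑)).det = a * (M'.submatrix ((↑) : s → n) (↑)).det)
    (x : n → R) :
    (diagonal x - M).det = a * (diagonal x - M').det := by
  simp only [det_diagonal_sub_eq_sum_submatrix_det, h, mul_sum]
  exact sum_congr rfl fun s _ => by ring

theorem det_add_vecMulVec {E : Matrix n n R} (hE : IsUnit E.det) (u v : n → R) :
    (E + vecMulVec u v).det = E.det * (1 + v ⬝ᵥ (E⁻¹ *ᵥ u)) := by
  rw [vecMulVec_eq Unit, det_add_replicateCol_mul_replicateRow hE]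
  congr 1
  rw [det_unique, ← replicateRow_vecMul, add_apply, one_apply_eq,
    replicateRow_mul_replicateCol_apply, dotProduct_mulVec]

theorem det_sub_mul_det_of_mul_eq_one {D D' A B : Matrix n n R} (hD : D * D' = 1)
    (hB : B * A = 1) :
    (D - B).det * A.det = (-1) ^ Fintype.card n * D.det * (D' - A).det := by
  have : (D - B) * A = -(D * (D' - A)) := by
    rw [Matrix.sub_mul, hB, Matrix.mul_sub, hD, neg_sub]
  rw [← det_mul, this, det_neg, det_mul, mul_assoc]

theorem dotProduct_sub_inv_mulVec_add_mul_det {D A : Matrix n n K} (hE : (D - A).det ≠ 0)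
    (u v : n → K) {d : K} (hd : d ≠ 0) :
    (v ⬝ᵥ ((D - A)⁻¹ *ᵥ u) + d) * (D - A).det = d * (D - (A - d⁻¹ • vecMulVec u v)).det := by
  rw [sub_sub_eq_add_sub, add_sub_right_comm, ← smul_vecMulVec, det_add_vecMulVec hE.isUnit,
    mulVec_smul, dotProduct_smul, smul_eq_mul]
  field_simp
  ring

theorem conj_det_diagonal_sub_map_ofReal (x : n → ℂ) (A : Matrix n n ℝ) :
    conj (diagonal x - A.map Complex.ofReal).det =
      (diagonal (fun i => conj (x i)) - A.map Complex.ofReal).det := by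
  rw [RingHom.map_det]
  congr 1
  ext i j
  by_cases h : i = j <;> simp [h]

theorem diagonal_mul_diagonal_conj {x : n → ℂ} (hx : ∀ i, ‖x i‖ = 1) :
    diagonal x * diagonal (fun i => conj (x i)) = 1 := by
  have hxx (i : n) : x i * conj (x i) = 1 := by
    rw [Complex.mul_conj, Complex.normSq_eq_norm_sq, hx]; norm_num
  simp [diagonal_mul_diagonal, hxx]

theorem norm_det_diagonal {x : n → ℂ} (hx : ∀ i, ‖x i‖ = 1) :
    ‖(diagonal x).det‖ = 1 := by
  simp [det_diagonal, hx]

theorem norm_det_diagonal_sub_map_inv_mul {x : n → ℂ} (hx : ∀ i, ‖x i‖ = 1)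
    {A : Matrix n n ℝ} (hA : IsUnit A.det) :
    ‖(diagonal x - A⁻¹.map Complex.ofReal).det‖ * ‖(A.map Complex.ofReal).det‖ =
      ‖(diagonal x - A.map Complex.ofReal).det‖ := by
  have hinv : A⁻¹.map Complex.ofReal * A.map Complex.ofReal = 1 := by
    change A⁻¹.map Complex.ofRealHom * A.map Complex.ofRealHom = 1
    rw [← Matrix.map_mul, nonsing_inv_mul _ hA, Matrix.map_one _ (map_zero _) (map_one _)]
  rw [← norm_mul, det_sub_mul_det_of_mul_eq_one (diagonal_mul_diagonal_conj hx) hinv,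
    ← conj_det_diagonal_sub_map_ofReal]
  simp only [norm_mul, norm_pow, norm_neg, norm_one, one_pow, one_mul, Complex.norm_conj,
    norm_det_diagonal hx]

end Matrix

theorem det_submatrix_map_ofReal_eq_principalMinor {N : ℕ} (X : Matrix (Fin N) (Fin N) ℝ)
    (s : Finset (Fin N)) :
    ((X.map Complex.ofReal).submatrix ((↑) : s → Fin N) (↑)).det = principalMinor X s := by
  rw [principalMinor, Complex.ofReal_det, submatrix_map]

theorem siso_uniallpass_of_principal_minors_general {N : ℕ}
    (A : Matrix (Fin N) (Fin N) ℝ) (hA : IsUnit A.det)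
    (b c : Fin N → ℝ) (d : ℝ) (hd : d = A.det ∨ d = -A.det)
    (a : ℝ) (ha : a = 1 ∨ a = -1)
    (hpm : ∀ s : Finset (Fin N),
      principalMinor (A - d⁻¹ • Matrix.vecMulVec b c) s = a * principalMinor A⁻¹ s)
    (m : Fin N → ℕ)
    (z : ℂ) (hz : ‖z‖ = 1)
    (hdet : (Matrix.diagonal (fun i => z ^ m i) - A.map Complex.ofReal).det ≠ 0) :
    ‖((fun i => (c i : ℂ)) ⬝ᵥ
          ((Matrix.diagonal (fun i => z ^ m i) - A.map Complex.ofReal)⁻¹ *ᵥ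
            fun i => (b i : ℂ)) + (d : ℂ))‖ = 1 := by
  set D : Matrix (Fin N) (Fin N) ℂ := diagonal fun i => z ^ m i
  have hzm (i : Fin N) : ‖z ^ m i‖ = 1 := by simp [hz]
  have hd0 : d ≠ 0 := by rcases hd with rfl | rfl <;> simpa using hA.ne_zero
  have hnorm_a : ‖(a : ℂ)‖ = 1 := by rcases ha with rfl | rfl <;> simp
  have hnormA : ‖(A.map Complex.ofReal).det‖ = ‖(d : ℂ)‖ := by
    rw [← Complex.ofReal_det]; rcases hd with rfl | rfl <;> simp
  have hshift : (A - d⁻¹ • vecMulVec b c).map Complex.ofReal =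
      A.map Complex.ofReal - (d : ℂ)⁻¹ • vecMulVec (fun i => (b i : ℂ)) fun i => (c i : ℂ) := by
    ext i j; simp [vecMulVec_apply]
  have hminors : (D - (A - d⁻¹ • vecMulVec b c).map Complex.ofReal).det =
      a * (D - A⁻¹.map Complex.ofReal).det :=
    det_diagonal_sub_eq_mul_of_submatrix_det_eq
      (fun s => by simp [det_submatrix_map_ofReal_eq_principalMinor, hpm]) _
  have key := dotProduct_sub_inv_mulVec_add_mul_det hdet (fun i => (b i : ℂ))
    (fun i => (c i : ℂ)) (Complex.ofReal_ne_zero.2 hd0)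
  rw [← hshift, hminors] at key
  refine mul_right_cancel₀ (b := ‖(D - A.map Complex.ofReal).det‖ * ‖(d : ℂ)‖)
    (by simp [hdet, hd0]) ?_
  calc _ = ‖(d : ℂ)‖ * (‖(D - A⁻¹.map Complex.ofReal).det‖ * ‖(A.map Complex.ofReal).det‖) := by
        rw [← mul_assoc, ← norm_mul, key, norm_mul, norm_mul, hnorm_a, hnormA]; ring
    _ = 1 * (‖(D - A.map Complex.ofReal).det‖ * ‖(d : ℂ)‖) := by
        rw [norm_det_diagonal_sub_map_inv_mul hzm hA]; ring

/-- Sufficiency direction of the SISO uniallpass characterization: if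
`d = ± det A`, `A_S = A − d⁻¹ b cᵀ`, and the principal minors of `A_S` match those
of `A⁻¹` up to a common sign, then the scalar transfer function
`cᵀ (diagonal(z^{m_i}) − A)⁻¹ b + d` has modulus one on the unit circle, for every
choice of delays. -/
theorem siso_uniallpass_of_principal_minors {N : ℕ}
    (A : Matrix (Fin N) (Fin N) ℝ) (hA : IsUnit A.det)
    (b c : Fin N → ℝ) (d : ℝ) (hd : d = A.det ∨ d = -A.det)
    (a : ℝ) (ha : a = 1 ∨ a = -1)
    (hpm : ∀ s : Finset (Fin N),
      principalMinor (A - d⁻¹ • Matrix.vecMulVec b c) s = a * principalMinor A⁻¹ s)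
    (m : Fin N → ℕ) (hm : ∀ i, 1 ≤ m i)
    (z : ℂ) (hz : ‖z‖ = 1)
    (hdet : (Matrix.diagonal (fun i => z ^ m i) - A.map Complex.ofReal).det ≠ 0) :
    ‖((fun i => (c i : ℂ)) ⬝ᵥ
          ((Matrix.diagonal (fun i => z ^ m i) - A.map Complex.ofReal)⁻¹ *ᵥ
            fun i => (b i : ℂ)) + (d : ℂ))‖ = 1 :=
  siso_uniallpass_of_principal_minors_general A hA b c d hd a ha hpm m z hz hdet
end

section
/- Let A be a real N×N matrix such that I − AᵀA is positive definite (equivalently, all singular values of A are strictly less than 1). Then there exist real N×N matrices B, C, D such that the 2N×2N block matrix [[A,B],[C,D]] is orthogonal. -/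
/-!
If `S Sᵀ = 1 - A Aᵀ` with `S` invertible and `Tᵀ T = 1 - Aᵀ A`, then
`[[A, S], [T, -T Aᵀ (Sᵀ)⁻¹]]` is orthogonal; the off-diagonal blocks cancel by the
intertwining relation `(1 - Aᵀ A) Aᵀ = Aᵀ (1 - A Aᵀ)`. Both factorizations exist because
`1 - A Aᵀ` is positive definite along with `1 - Aᵀ A`: its inverse is `1 + A (1 - Aᵀ A)⁻¹ Aᵀ`.
-/

open Matrix

namespace Matrix

variable {n : Type*} [Fintype n] [DecidableEq n]

theorem one_sub_conjTranspose_mul_mul_conjTranspose {R : Type*} [Ring R] [StarRing R]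
    (A : Matrix n n R) : (1 - Aᴴ * A) * Aᴴ = Aᴴ * (1 - A * Aᴴ) := by
  noncomm_ring

theorem one_add_mul_inv_mul_conjTranspose_mul_one_sub {R : Type*} [CommRing R] [StarRing R]
    {A : Matrix n n R} (hA : IsUnit (1 - Aᴴ * A)) :
    (1 + A * (1 - Aᴴ * A)⁻¹ * Aᴴ) * (1 - A * Aᴴ) = 1 := by
  have hA' : IsUnit (1 - Aᴴ * A).det := (isUnit_iff_isUnit_det _).mp hA
  rw [add_mul, one_mul, Matrix.mul_assoc, Matrix.mul_assoc,
    ← one_sub_conjTranspose_mul_mul_conjTranspose, ← Matrix.mul_assoc (1 - Aᴴ * A)⁻¹,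
    nonsing_inv_mul _ hA', Matrix.one_mul]
  noncomm_ring

theorem PosDef.one_sub_mul_conjTranspose {K : Type*} [Field K] [PartialOrder K] [StarRing K]
    [StarOrderedRing K] {A : Matrix n n K} (hA : (1 - Aᴴ * A).PosDef) :
    (1 - A * Aᴴ).PosDef := by
  have hinv : (1 - A * Aᴴ)⁻¹ = 1 + A * (1 - Aᴴ * A)⁻¹ * Aᴴ :=
    inv_eq_left_inv (one_add_mul_inv_mul_conjTranspose_mul_one_sub hA.isUnit)
  rw [← posDef_inv_iff, hinv]
  exact PosDef.one.add_posSemidef (hA.inv.posSemidef.mul_mul_conjTranspose_same A)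

open scoped ComplexOrder MatrixOrder in
theorem PosDef.exists_isUnit_mul_conjTranspose_eq {𝕜 : Type*} [RCLike 𝕜] {A : Matrix n n 𝕜}
    (hA : A.PosDef) : ∃ S, IsUnit S ∧ S * Sᴴ = A := by
  obtain ⟨Y, hY, rfl⟩ :=
    CStarAlgebra.isStrictlyPositive_iff_eq_star_mul_self.mp hA.isStrictlyPositive
  exact ⟨Yᴴ, hY.star, by rw [conjTranspose_conjTranspose]; rfl⟩

theorem fromBlocks_mul_transpose_eq_one {R : Type*} [CommRing R] {A S T : Matrix n n R}
    (hS : IsUnit S) (hSS : S * Sᵀ = 1 - A * Aᵀ) (hTT : Tᵀ * T = 1 - Aᵀ * A) :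
    fromBlocks A S T (-(T * Aᵀ * Sᵀ⁻¹)) * (fromBlocks A S T (-(T * Aᵀ * Sᵀ⁻¹)))ᵀ = 1 := by
  have hSd : IsUnit S.det := (isUnit_iff_isUnit_det S).mp hS
  have hSTd : IsUnit Sᵀ.det := by rwa [det_transpose]
  have hTD : Tᵀ * -(T * Aᵀ * Sᵀ⁻¹) = -(Aᵀ * S) :=
    calc Tᵀ * -(T * Aᵀ * Sᵀ⁻¹) = -((Tᵀ * T) * Aᵀ * Sᵀ⁻¹) := by noncomm_ring
      _ = -(Aᵀ * (S * Sᵀ) * Sᵀ⁻¹) := by rw [hTT, hSS]; noncomm_ring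
      _ = -(Aᵀ * S) := by
        rw [Matrix.mul_assoc, Matrix.mul_assoc, mul_nonsing_inv _ hSTd, Matrix.mul_one]
  have h11 : Aᵀ * A + Tᵀ * T = 1 := by rw [hTT]; abel
  have h12 : Aᵀ * S + Tᵀ * -(T * Aᵀ * Sᵀ⁻¹) = 0 := by rw [hTD]; abel
  have h21 : Sᵀ * A + (-(T * Aᵀ * Sᵀ⁻¹))ᵀ * T = 0 := by
    simpa only [transpose_add, transpose_mul, transpose_transpose, transpose_zero]
      using congrArg transpose h12
  have h22 : Sᵀ * S + (-(T * Aᵀ * Sᵀ⁻¹))ᵀ * -(T * Aᵀ * Sᵀ⁻¹) = 1 :=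
    calc Sᵀ * S + (-(T * Aᵀ * Sᵀ⁻¹))ᵀ * -(T * Aᵀ * Sᵀ⁻¹)
        = Sᵀ * S - S⁻¹ * A * (Tᵀ * -(T * Aᵀ * Sᵀ⁻¹)) := by
          simp only [transpose_neg, transpose_mul, transpose_nonsing_inv, transpose_transpose]
          noncomm_ring
      _ = Sᵀ * S + S⁻¹ * (1 - S * Sᵀ) * S := by rw [hTD, hSS]; noncomm_ring
      _ = Sᵀ * S + S⁻¹ * S - (S⁻¹ * S) * Sᵀ * S := by noncomm_ring
      _ = 1 := by rw [nonsing_inv_mul _ hSd]; noncomm_ring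
  rw [mul_eq_one_comm, fromBlocks_transpose, fromBlocks_multiply, h11, h12, h21, h22,
    fromBlocks_one]

end Matrix

/-- Full MIMO orthogonal completion: a real square matrix `A` with `I − AᵀA`
positive definite (all singular values strictly below one) is the top-left block
of some orthogonal `2N×2N` matrix `[[A,B],[C,D]]`. -/
theorem orthogonal_completion_full_mimo {N : ℕ}
    (A : Matrix (Fin N) (Fin N) ℝ)
    (hA : ((1 : Matrix (Fin N) (Fin N) ℝ) - Aᵀ * A).PosDef) :
    ∃ (B C D : Matrix (Fin N) (Fin N) ℝ),
      Matrix.fromBlocks A B C D * (Matrix.fromBlocks A B C D)ᵀ = 1 := by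
  rw [← conjTranspose_eq_transpose_of_trivial] at hA
  obtain ⟨S, hS, hSS⟩ := hA.one_sub_mul_conjTranspose.exists_isUnit_mul_conjTranspose_eq
  obtain ⟨T, -, hTT⟩ := hA.exists_isUnit_mul_conjTranspose_eq
  simp only [conjTranspose_eq_transpose_of_trivial] at hSS hTT
  exact ⟨S, Tᵀ, _, fromBlocks_mul_transpose_eq_one hS hSS (by rwa [transpose_transpose])⟩
end

section
/- Let A be a real N×N matrix such that I − AᵀA is positive semidefinite of rank at most M. Then there exist a real N×M matrix B, a real M×N matrix C, and a real M×M matrix D such that the (N+M)×(N+M) block matrix [[A,B],[C,D]] is orthogonal. -/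
/-!
The columns of `[A; C]` are orthonormal in `ℝ^(N+M)` as soon as `CᵀC = I − AᵀA`, and any
orthonormal family extends to an orthonormal basis, whose coordinate matrix is orthogonal.
Such a `C` with `M` rows exists because `I − AᵀA = SᵀS` is the Gram matrix of the columns of `S`;
these span a space of dimension `rank (I − AᵀA) ≤ M`, so their coordinates in an orthonormal basis
of that space, padded with zero rows, give `C`.
-/

open Matrix

namespace Matrix

open scoped ComplexOrder

variable {𝕜 : Type*} [RCLike 𝕜]

theorem exists_conjTranspose_mul_self_eq_of_le {n : Type*} {d M : ℕ} (hdM : d ≤ M)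
    (X : Matrix (Fin d) n 𝕜) : ∃ C : Matrix (Fin M) n 𝕜, Cᴴ * C = Xᴴ * X := by
  obtain ⟨k, rfl⟩ := Nat.exists_eq_add_of_le hdM
  refine ⟨reindex finSumFinEquiv (Equiv.refl n) (fromRows X 0), ?_⟩
  simp [conjTranspose_fromRows_eq_fromCols_conjTranspose, fromCols_mul_fromRows]

theorem gram_toLp_col {m n : Type*} [Fintype m] (S : Matrix m n 𝕜) :
    gram 𝕜 (fun j => WithLp.toLp 2 (S.col j) : n → EuclideanSpace 𝕜 m) = Sᴴ * S :=
  gram_eq_conjTranspose_mul (EuclideanSpace.basisFun m 𝕜) _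

theorem orthonormal_toLp_col_iff {m n : Type*} [Fintype m] [DecidableEq n] {V : Matrix m n 𝕜} :
    Orthonormal 𝕜 (fun j => WithLp.toLp 2 (V.col j) : n → EuclideanSpace 𝕜 m) ↔ Vᴴ * V = 1 := by
  rw [← gram_eq_one_iff_orthonormal, gram_toLp_col]

theorem exists_conjTranspose_mul_self_eq_of_rank_le {m n : Type*} [Fintype m] [Fintype n]
    {M : ℕ} (S : Matrix m n 𝕜) (hS : S.rank ≤ M) : ∃ C : Matrix (Fin M) n 𝕜, Cᴴ * C = Sᴴ * S := by
  set v : n → EuclideanSpace 𝕜 m := fun j => WithLp.toLp 2 (S.col j)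
  set K := Submodule.span 𝕜 (Set.range v)
  have hK : Module.finrank 𝕜 K = S.rank := by
    have hK_map : K = (Submodule.span 𝕜 (Set.range S.col)).map
        ((WithLp.linearEquiv 2 𝕜 (m → 𝕜)).symm : (m → 𝕜) →ₗ[𝕜] EuclideanSpace 𝕜 m) := by
      rw [Submodule.map_span, ← Set.range_comp]; rfl
    rw [rank_eq_finrank_span_cols, hK_map, LinearEquiv.finrank_map_eq]
  let w : n → K := fun j => ⟨v j, Submodule.subset_span ⟨j, rfl⟩⟩
  have hw : gram 𝕜 w = Sᴴ * S := gram_toLp_col S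
  obtain ⟨C, hC⟩ := exists_conjTranspose_mul_self_eq_of_le (hK ▸ hS)
    (of fun i j => (stdOrthonormalBasis 𝕜 K).repr (w j) i)
  exact ⟨C, by rw [hC, ← gram_eq_conjTranspose_mul, hw]⟩

theorem PosSemidef.exists_conjTranspose_mul_eq_of_rank_le {n : Type*} [Fintype n]
    [DecidableEq n] {M : ℕ} {P : Matrix n n 𝕜} (hP : P.PosSemidef) (hr : P.rank ≤ M) :
    ∃ C : Matrix (Fin M) n 𝕜, Cᴴ * C = P := by
  obtain ⟨S, rfl⟩ : ∃ S : Matrix n n 𝕜, P = Sᴴ * S := by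
    open scoped MatrixOrder in
    exact CStarAlgebra.nonneg_iff_eq_star_mul_self.mp hP.nonneg
  rw [rank_conjTranspose_mul_self] at hr
  exact exists_conjTranspose_mul_self_eq_of_rank_le S hr

theorem exists_fromCols_mem_unitaryGroup {m n : Type*} [Fintype m] [Fintype n] [DecidableEq m]
    [DecidableEq n] {V : Matrix (m ⊕ n) m 𝕜} (hV : Vᴴ * V = 1) :
    ∃ W : Matrix (m ⊕ n) n 𝕜, fromCols V W ∈ unitaryGroup (m ⊕ n) 𝕜 := by
  set u : m → EuclideanSpace 𝕜 (m ⊕ n) := fun j => WithLp.toLp 2 (V.col j)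
  have hu : Orthonormal 𝕜 ((Set.range (Sum.inl : m → m ⊕ n)).domRestrict (Sum.elim u 0)) := by
    convert (orthonormal_toLp_col_iff.mpr hV).comp _
      (Equiv.ofInjective _ Sum.inl_injective).symm.injective
    ext ⟨_, j, rfl⟩ : 1
    simp [u]
  obtain ⟨b, hb⟩ := hu.exists_orthonormalBasis_extension_of_card_eq (by simp)
  set Q := (EuclideanSpace.basisFun (m ⊕ n) 𝕜).toBasis.toMatrix b
  have hQ : Q.toCols₁ = V := by
    ext i j
    simp only [Q, toCols₁_apply, Module.Basis.toMatrix_apply, hb _ ⟨j, rfl⟩]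
    rfl
  refine ⟨Q.toCols₂, ?_⟩
  rw [← hQ, fromCols_toCols]
  exact (EuclideanSpace.basisFun _ 𝕜).toMatrix_orthonormalBasis_mem_unitary b

end Matrix

/-- Converse part of Fiedler's theorem: a real `N×N` matrix `A` such that
`I − AᵀA` is positive semidefinite of rank at most `M` embeds as the leading
principal block of an orthogonal `(N+M)×(N+M)` matrix. -/
theorem fiedler_orthogonal_completion {N M : ℕ}
    (A : Matrix (Fin N) (Fin N) ℝ)
    (hpsd : ((1 : Matrix (Fin N) (Fin N) ℝ) - Aᵀ * A).PosSemidef)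
    (hrank : ((1 : Matrix (Fin N) (Fin N) ℝ) - Aᵀ * A).rank ≤ M) :
    ∃ (B : Matrix (Fin N) (Fin M) ℝ) (C : Matrix (Fin M) (Fin N) ℝ)
      (D : Matrix (Fin M) (Fin M) ℝ),
      Matrix.fromBlocks A B C D * (Matrix.fromBlocks A B C D)ᵀ = 1 := by
  obtain ⟨C, hC⟩ := hpsd.exists_conjTranspose_mul_eq_of_rank_le hrank
  have hV : (fromRows A C)ᴴ * fromRows A C = 1 := by
    rw [conjTranspose_fromRows_eq_fromCols_conjTranspose, fromCols_mul_fromRows, hC,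
      conjTranspose_eq_transpose_of_trivial, add_sub_cancel]
  obtain ⟨W, hW⟩ := exists_fromCols_mem_unitaryGroup hV
  refine ⟨W.toRows₁, C, W.toRows₂, ?_⟩
  rw [← fromCols_fromRows_eq_fromBlocks, fromRows_toRows, ← conjTranspose_eq_transpose_of_trivial]
  exact mem_unitaryGroup_iff.mp hW
end

section
/- Let q, q̂ ∈ ℝ^N satisfy the strict interlacing q̂_1 < q_1 < q̂_2 < q_2 < ⋯ < q̂_N < q_N. Define 𝒜(x) = ∏_{k=1}^N (x − q_k), ℬ(x) = ∏_{k=1}^N (x − q̂_k), α_j = −𝒜(q̂_j)/ℬ′(q̂_j), and β_i = ℬ(q_i)/𝒜′(q_i). Then the N×N matrix U with entries u_{ij} = √(β_i α_j) / (q_i − q̂_j) is orthogonal: U Uᵀ = I. -/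
/-!
The weights `α_j` make `∑_j α_j / ((q_i - q̂_j)(q_l - q̂_j))` the partial-fraction expansion, over
the poles `q̂_j`, of `∏_{k ≠ i} (x - q_k) / ℬ(x)` evaluated at `x = q_l`; it vanishes for `l ≠ i`
and equals `1 / β_i` for `l = i`. Interlacing makes all `α_j`, `β_i` positive, so
`√(β_i α_j) = √β_i √α_j` and `β_i^{1/2} β_l^{1/2}` times this sum is the entry `(U Uᵀ)_{il}`.
-/

open Matrix Finset Polynomial

section PartialFractions

variable {K : Type*} [Field K] {ι : Type*} [Fintype ι] [DecidableEq ι]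

theorem eval_div_prod_sub_eq_sum {v : ι → K} (hv : Function.Injective v) {P : K[X]}
    (hP : P.degree < Fintype.card ι) {x : K} (hx : ∀ j, x ≠ v j) :
    P.eval x / ∏ j, (x - v j) =
      ∑ j, P.eval (v j) / ((x - v j) * ∏ k ∈ univ.erase j, (v j - v k)) := by
  have hnodal : ∏ j, (x - v j) ≠ 0 := prod_ne_zero_iff.mpr fun j _ => sub_ne_zero.mpr (hx j)
  conv_lhs => rw [Lagrange.eq_interpolate (s := univ) (f := P) (fun a _ b _ h => hv h)
    (by simpa using hP)]
  rw [Lagrange.eval_interpolate_not_at_node _ fun j _ => hx j, Lagrange.eval_nodal,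
    mul_div_cancel_left₀ _ hnodal]
  refine sum_congr rfl fun j _ => ?_
  rw [Lagrange.nodalWeight, prod_inv_distrib]
  field_simp

theorem prod_div_prod_erase (f g : ι → K) (i : ι) :
    (∏ k, f k) / ∏ k ∈ univ.erase i, g k = f i * ∏ k ∈ univ.erase i, f k / g k := by
  rw [← mul_prod_erase univ f (mem_univ i), mul_div_assoc, prod_div_distrib]

/-- The weight `α_j = -𝒜(q̂_j) / ℬ'(q̂_j)`, with `ℬ'(q̂_j)` written as `∏_{k ≠ j} (q̂_j - q̂_k)`. -/
def cauchyAlpha (q qh : ι → K) (j : ι) : K :=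
  -(∏ k, (qh j - q k)) / ∏ k ∈ univ.erase j, (qh j - qh k)

/-- The weight `β_i = ℬ(q_i) / 𝒜'(q_i)`, with `𝒜'(q_i)` written as `∏_{k ≠ i} (q_i - q_k)`. -/
def cauchyBeta (q qh : ι → K) (i : ι) : K :=
  (∏ k, (q i - qh k)) / ∏ k ∈ univ.erase i, (q i - q k)

theorem sum_cauchyAlpha_div_mul {q qh : ι → K} (hqh : Function.Injective qh)
    (hne : ∀ i j, q i ≠ qh j) (i l : ι) :
    ∑ j, cauchyAlpha q qh j / ((q i - qh j) * (q l - qh j)) =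
      if i = l then (cauchyBeta q qh i)⁻¹ else 0 := by
  have hdeg : (Lagrange.nodal (univ.erase i) q).degree < Fintype.card ι := by
    rw [Lagrange.degree_nodal, card_erase_of_mem (mem_univ i), card_univ]
    exact_mod_cast Nat.sub_lt (Fintype.card_pos_iff.mpr ⟨i⟩) one_pos
  have hpf := eval_div_prod_sub_eq_sum hqh hdeg (hne l)
  simp only [Lagrange.eval_nodal] at hpf
  have hterm : ∀ j, cauchyAlpha q qh j / ((q i - qh j) * (q l - qh j)) =
      (∏ k ∈ univ.erase i, (qh j - q k)) /
        ((q l - qh j) * ∏ k ∈ univ.erase j, (qh j - qh k)) := by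
    intro j
    rw [cauchyAlpha, ← mul_prod_erase univ (fun k => qh j - q k) (mem_univ i)]
    have := sub_ne_zero.mpr (hne i j)
    field_simp
    ring
  rw [sum_congr rfl fun j _ => hterm j, ← hpf]
  split_ifs with hil
  · rw [hil, cauchyBeta, inv_div]
  · rw [prod_eq_zero (mem_erase.mpr ⟨Ne.symm hil, mem_univ l⟩) (sub_self _), zero_div]

end PartialFractions

/-- `q̂_1 < q_1 < q̂_2 < q_2 < ⋯` -/
structure StrictlyInterlaced {ι K : Type*} [LinearOrder ι] [LT K] (qh q : ι → K) : Prop where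
  lt_self : ∀ i, qh i < q i
  lt_of_lt : ∀ i j, i < j → q i < qh j

namespace StrictlyInterlaced

section Order

variable {ι K : Type*} [LinearOrder ι] [Preorder K] {qh q : ι → K}

theorem strictMono_left (h : StrictlyInterlaced qh q) : StrictMono qh :=
  fun a b hab => (h.lt_self a).trans (h.lt_of_lt a b hab)

theorem strictMono_right (h : StrictlyInterlaced qh q) : StrictMono q :=
  fun a b hab => (h.lt_of_lt a b hab).trans (h.lt_self b)

theorem lt_of_le (h : StrictlyInterlaced qh q) {i j : ι} (hji : j ≤ i) : qh j < q i :=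
  (h.strictMono_left.monotone hji).trans_lt (h.lt_self i)

theorem right_ne_left (h : StrictlyInterlaced qh q) (i j : ι) : q i ≠ qh j := by
  rcases le_or_gt j i with hji | hij
  · exact (h.lt_of_le hji).ne'
  · exact (h.lt_of_lt i j hij).ne

end Order

variable {ι K : Type*} [LinearOrder ι] [Field K] [LinearOrder K] [IsStrictOrderedRing K]
  {qh q : ι → K}

theorem div_sub_pos_right (h : StrictlyInterlaced qh q) {i k : ι} (hki : k ≠ i) :
    0 < (q i - qh k) / (q i - q k) := by
  rcases hki.lt_or_gt with hki | hik
  · exact div_pos (sub_pos.mpr (h.lt_of_le hki.le)) (sub_pos.mpr (h.strictMono_right hki))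
  · exact div_pos_of_neg_of_neg (sub_neg.mpr (h.lt_of_lt i k hik))
      (sub_neg.mpr (h.strictMono_right hik))

theorem div_sub_pos_left (h : StrictlyInterlaced qh q) {j k : ι} (hkj : k ≠ j) :
    0 < (qh j - q k) / (qh j - qh k) := by
  rcases hkj.lt_or_gt with hkj | hjk
  · exact div_pos (sub_pos.mpr (h.lt_of_lt k j hkj)) (sub_pos.mpr (h.strictMono_left hkj))
  · exact div_pos_of_neg_of_neg (sub_neg.mpr (h.lt_of_le hjk.le))
      (sub_neg.mpr (h.strictMono_left hjk))

variable [Fintype ι] [DecidableEq ι]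

theorem cauchyBeta_pos (h : StrictlyInterlaced qh q) (i : ι) : 0 < cauchyBeta q qh i := by
  rw [cauchyBeta, prod_div_prod_erase]
  exact mul_pos (sub_pos.mpr (h.lt_self i))
    (prod_pos fun k hk => h.div_sub_pos_right (ne_of_mem_erase hk))

theorem cauchyAlpha_pos (h : StrictlyInterlaced qh q) (j : ι) : 0 < cauchyAlpha q qh j := by
  rw [cauchyAlpha, neg_div, prod_div_prod_erase, ← neg_mul, neg_sub]
  exact mul_pos (sub_pos.mpr (h.lt_self j))
    (prod_pos fun k hk => h.div_sub_pos_left (ne_of_mem_erase hk))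

end StrictlyInterlaced

theorem of_sqrt_mul_div_sub_mul_transpose_eq_one {ι : Type*} [Fintype ι] [DecidableEq ι]
    {x y α β : ι → ℝ} (hβ : ∀ i, 0 < β i) (hα : ∀ j, 0 ≤ α j)
    (hsum : ∀ i l, ∑ j, α j / ((x i - y j) * (x l - y j)) = if i = l then (β i)⁻¹ else 0) :
    (of fun i j => √(β i * α j) / (x i - y j)) *
      (of fun i j => √(β i * α j) / (x i - y j))ᵀ = 1 := by
  ext i l
  simp only [mul_apply, one_apply, of_apply, transpose_apply]
  calc ∑ j, √(β i * α j) / (x i - y j) * (√(β l * α j) / (x l - y j))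
      = √(β i) * √(β l) * ∑ j, α j / ((x i - y j) * (x l - y j)) := by
        rw [mul_sum]
        refine sum_congr rfl fun j _ => ?_
        rw [Real.sqrt_mul (hβ i).le, Real.sqrt_mul (hβ l).le, div_mul_div_comm,
          mul_mul_mul_comm, Real.mul_self_sqrt (hα j), mul_div_assoc]
    _ = if i = l then 1 else 0 := by
        rw [hsum]
        split_ifs with hil
        · rw [hil, Real.mul_self_sqrt (hβ l).le, mul_inv_cancel₀ (hβ l).ne']
        · rw [mul_zero]

/-- Orthogonality of the Cauchy-like matrix built from strictly interlaced nodes: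
with `q̂_1 < q_1 < q̂_2 < q_2 < ⋯ < q̂_N < q_N`,
`α_j = −𝒜(q̂_j)/ℬ′(q̂_j)`, `β_i = ℬ(q_i)/𝒜′(q_i)`, the matrix
`U = (√(β_i α_j)/(q_i − q̂_j))_{ij}` satisfies `U Uᵀ = I`. -/
theorem interlaced_cauchy_like_orthogonal {N : ℕ} (q qh : Fin N → ℝ)
    (h1 : ∀ i, qh i < q i)
    (h2 : ∀ i j : Fin N, i < j → q i < qh j) :
    (Matrix.of fun i j : Fin N =>
        Real.sqrt
          (((∏ k, (q i - qh k)) / ∏ k ∈ Finset.univ.erase i, (q i - q k)) *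
           (-(∏ k, (qh j - q k)) / ∏ k ∈ Finset.univ.erase j, (qh j - qh k))) /
        (q i - qh j)) *
      (Matrix.of fun i j : Fin N =>
        Real.sqrt
          (((∏ k, (q i - qh k)) / ∏ k ∈ Finset.univ.erase i, (q i - q k)) *
           (-(∏ k, (qh j - q k)) / ∏ k ∈ Finset.univ.erase j, (qh j - qh k))) /
        (q i - qh j))ᵀ = 1 := by
  have h : StrictlyInterlaced qh q := ⟨h1, h2⟩
  exact of_sqrt_mul_div_sub_mul_transpose_eq_one (β := cauchyBeta q qh) (α := cauchyAlpha q qh)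
    h.cauchyBeta_pos (fun j => (h.cauchyAlpha_pos j).le)
    (sum_cauchyAlpha_div_mul h.strictMono_left.injective h.right_ne_left)
end

section
/- Let U be a real orthogonal N×N matrix (U Uᵀ = I), let r > 0 be a real number, let m be a delay vector, and let Γ be the diagonal matrix with diagonal entries r^{m_1},…,r^{m_N}. Then every complex number z with det(diagonal(z^{m_1},…,z^{m_N}) − UΓ) = 0 satisfies |z| = r. -/
open Matrix

/-! Writing `w = z / r`, the matrix factors as `(diagonal (w ^ m i) - U) * Γ` with `Γ` invertible,
so a pole `z` yields a vector `v ≠ 0` with `U v = diagonal (w ^ m i) v`. As `U` preserves the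
Euclidean norm, `∑ ‖w‖ ^ (2 m i) ‖v i‖² = ∑ ‖v i‖²`; since every `m i ≥ 1`, the left side is
strictly smaller when `‖w‖ < 1` and strictly larger when `‖w‖ > 1`. -/

theorem eq_one_of_sum_pow_mul_eq_sum {ι : Type*} {s : Finset ι} {t : ℝ} (ht : 0 ≤ t)
    {m : ι → ℕ} {a : ι → ℝ} (ha : ∀ i ∈ s, 0 ≤ a i)
    (hsum : ∑ i ∈ s, t ^ m i * a i = ∑ i ∈ s, a i) {j : ι} (hj : j ∈ s) (haj : a j ≠ 0)
    (hmj : m j ≠ 0) : t = 1 := by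
  suffices t ^ m j * a j = a j from
    (pow_eq_one_iff_of_nonneg ht hmj).mp (mul_eq_right₀ haj |>.mp this)
  rcases le_total t 1 with h | h
  · exact (Finset.sum_eq_sum_iff_of_le fun i hi =>
      mul_le_of_le_one_left (ha i hi) (pow_le_one₀ ht h)).mp hsum j hj
  · exact ((Finset.sum_eq_sum_iff_of_le fun i hi =>
      le_mul_of_one_le_left (ha i hi) (one_le_pow₀ h)).mp hsum.symm j hj).symm

section
variable {n : Type*} [Fintype n] [DecidableEq n]

theorem diagonal_pow_sub_mul_diagonal_pow {K : Type*} [Field K] (A : Matrix n n K) (m : n → ℕ)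
    (z : K) {c : K} (hc : c ≠ 0) :
    diagonal (fun i => z ^ m i) - A * diagonal (fun i => c ^ m i) =
      (diagonal (fun i => (z / c) ^ m i) - A) * diagonal (fun i => c ^ m i) := by
  rw [sub_mul, diagonal_mul_diagonal]
  simp_rw [← mul_pow, div_mul_cancel₀ z hc]

theorem det_diagonal_pow_sub_mul_diagonal_pow_eq_zero_iff {K : Type*} [Field K]
    (A : Matrix n n K) (m : n → ℕ) (z : K) {c : K} (hc : c ≠ 0) :
    (diagonal (fun i => z ^ m i) - A * diagonal (fun i => c ^ m i)).det = 0 ↔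
      (diagonal (fun i => (z / c) ^ m i) - A).det = 0 := by
  rw [diagonal_pow_sub_mul_diagonal_pow A m z hc, det_mul, det_diagonal,
    mul_eq_zero, or_iff_left (Finset.prod_ne_zero_iff.mpr fun i _ => pow_ne_zero _ hc)]

theorem exists_mulVec_eq_mul_of_det_diagonal_sub_eq_zero {K : Type*} [Field K]
    {A : Matrix n n K} {d : n → K} (h : (diagonal d - A).det = 0) :
    ∃ v ≠ 0, A *ᵥ v = d * v := by
  obtain ⟨v, hv0, hv⟩ := exists_mulVec_eq_zero_iff.mpr h
  refine ⟨v, hv0, ?_⟩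
  rw [sub_mulVec, sub_eq_zero] at hv
  exact hv.symm.trans (funext (mulVec_diagonal d v))

theorem star_mulVec_dotProduct_mulVec {R : Type*} [CommSemiring R] [StarRing R]
    {A : Matrix n n R} (hA : Aᴴ * A = 1) (v : n → R) :
    star (A *ᵥ v) ⬝ᵥ (A *ᵥ v) = star v ⬝ᵥ v := by
  rw [star_mulVec, dotProduct_mulVec, vecMul_vecMul, hA, vecMul_one]

theorem sum_norm_sq_mul_eq_of_mulVec_eq_mul {𝕜 : Type*} [RCLike 𝕜] {A : Matrix n n 𝕜}
    (hA : Aᴴ * A = 1) {d v : n → 𝕜} (h : A *ᵥ v = d * v) :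
    ∑ i, ‖d i‖ ^ 2 * ‖v i‖ ^ 2 = ∑ i, ‖v i‖ ^ 2 := by
  have := star_mulVec_dotProduct_mulVec hA v
  rw [h] at this
  simp only [dotProduct, Pi.star_apply, Pi.mul_apply, star_mul', RCLike.star_def] at this
  simp_rw [mul_mul_mul_comm, RCLike.conj_mul] at this
  exact_mod_cast this

theorem conjTranspose_map_ofReal_mul_self {U : Matrix n n ℝ} (hU : U * Uᵀ = 1) :
    (U.map Complex.ofReal)ᴴ * U.map Complex.ofReal = 1 := by
  rw [← conjTranspose_map _ fun x => (Complex.conj_ofReal x).symm,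
    conjTranspose_eq_transpose_of_trivial]
  exact (Matrix.map_mul (f := Complex.ofRealHom)).symm.trans <| by
    rw [mul_eq_one_comm.mp hU, Matrix.map_one _ (map_zero _) (map_one _)]

end

/-- Homogeneous decay: for an orthogonal `U`, decay rate `r > 0`, delay vector `m`
and absorption matrix `Γ = diagonal(r^{m_i})`, every root of
`det(diagonal(z^{m_i}) − UΓ)` has modulus exactly `r`. -/
theorem homogeneous_decay_poles {N : ℕ}
    (U : Matrix (Fin N) (Fin N) ℝ) (hU : U * Uᵀ = 1)
    (r : ℝ) (hr : 0 < r)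
    (m : Fin N → ℕ) (hm : ∀ i, 1 ≤ m i) :
    ∀ z : ℂ,
      (Matrix.diagonal (fun i => z ^ m i) -
          (U * Matrix.diagonal fun i => r ^ m i).map Complex.ofReal).det = 0 →
      ‖z‖ = r := by
  intro z hz
  have hmap : (U * diagonal fun i => r ^ m i).map Complex.ofReal =
      U.map Complex.ofReal * diagonal fun i => (r : ℂ) ^ m i := by
    refine (Matrix.map_mul (f := Complex.ofRealHom)).trans (congrArg (U.map Complex.ofReal * ·) ?_)
    simp [diagonal_map]
  rw [hmap, det_diagonal_pow_sub_mul_diagonal_pow_eq_zero_iff _ _ _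
    (Complex.ofReal_ne_zero.mpr hr.ne')] at hz
  obtain ⟨v, hv0, hv⟩ := exists_mulVec_eq_mul_of_det_diagonal_sub_eq_zero hz
  obtain ⟨j, hj⟩ := Function.ne_iff.mp hv0
  have hsum := sum_norm_sq_mul_eq_of_mulVec_eq_mul (conjTranspose_map_ofReal_mul_self hU) hv
  simp_rw [norm_pow, ← pow_mul] at hsum
  have hw : ‖z / r‖ = 1 := eq_one_of_sum_pow_mul_eq_sum (norm_nonneg _)
    (fun i _ => sq_nonneg _) hsum (Finset.mem_univ j) (pow_ne_zero 2 (norm_ne_zero_iff.mpr hj))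
    (by have := hm j; omega)
  rwa [norm_div, Complex.norm_real, Real.norm_of_nonneg hr.le, div_eq_one_iff_eq hr.ne'] at hw
end

section
/- Let N ≥ 1 and let g_1,…,g_N be real numbers with |g_i| < 1 for all i. Define the real N×N matrix A by A_{ii} = −g_i, A_{ij} = 0 for i < j, and A_{ij} = (1 − g_j²)·∏_{k=j+1}^{i−1} g_k for i > j; the vector b ∈ ℝ^N by b_i = ∏_{k=1}^{i−1} g_k; the vector c ∈ ℝ^N by c_i = (1 − g_i²)·∏_{k=i+1}^{N} g_k; and the scalar d = ∏_{k=1}^{N} g_k. Let Q be the diagonal matrix with diagonal entries 1/(1 − g_i²). Then Q is positive definite and A Q Aᵀ + b bᵀ = Q, A Q c + b d = 0, and cᵀ Q c + d² = 1. -/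
/-!
Write `p(m, i) = ∏_{m<k<i} g_k`. Telescoping gives
`∑_{m<i} (1 - g_m²) p(m, i)² + (∏_{k<i} g_k)² = 1`, i.e. the part of row `i` of `A` left of the
diagonal, weighted by `Q`, together with `b_i` is a unit vector. For `i ≤ j` the corresponding
entries of row `j` together with `b_j` are that vector times `∏_{i≤k<j} g_k`, and the entries
`(Q c)_m`, `m < i`, together with `d` are it times `∏_{k≥i} g_k`; the diagonal entry `-g_i`
supplies the remaining term in each identity.
-/

open Matrix Finset

namespace Finset

variable {ι M : Type*} [LinearOrder ι] [CommMonoid M] (f : ι → M)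

theorem prod_Ioo_mul_prod_Ico [LocallyFiniteOrder ι] {a b c : ι} (hab : a < b) (hbc : b ≤ c) :
    (∏ k ∈ Ioo a b, f k) * ∏ k ∈ Ico b c, f k = ∏ k ∈ Ioo a c, f k := by
  rw [← prod_union (by grind [disjoint_left])]
  congr 1
  grind

theorem prod_Iio_mul_prod_Ico [LocallyFiniteOrder ι] [LocallyFiniteOrderBot ι] {a b : ι}
    (hab : a ≤ b) :
    (∏ k ∈ Iio a, f k) * ∏ k ∈ Ico a b, f k = ∏ k ∈ Iio b, f k := by
  rw [← prod_union (by grind [disjoint_left])]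
  congr 1
  grind

theorem prod_Ioo_mul_prod_Ici [LocallyFiniteOrder ι] [LocallyFiniteOrderTop ι] {a b : ι}
    (hab : a < b) :
    (∏ k ∈ Ioo a b, f k) * ∏ k ∈ Ici b, f k = ∏ k ∈ Ioi a, f k := by
  rw [← prod_union (by grind [disjoint_left])]
  congr 1
  grind

theorem prod_Iio_mul_prod_Ici [Fintype ι] [LocallyFiniteOrderBot ι] [LocallyFiniteOrderTop ι]
    (a : ι) :
    (∏ k ∈ Iio a, f k) * ∏ k ∈ Ici a, f k = ∏ k, f k := by
  rw [← prod_union (by grind [disjoint_left])]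
  congr 1
  grind

theorem sum_one_sub_mul_prod_gt_add_prod {R : Type*} [CommRing R] (s : Finset ι) (h : ι → R) :
    ∑ i ∈ s, (1 - h i) * ∏ j ∈ s with i < j, h j + ∏ i ∈ s, h i = 1 := by
  simpa [add_comm] using (prod_add_ordered s h fun i => 1 - h i).symm

end Finset

def IsUniallpass {ι K : Type*} [Fintype ι] [CommSemiring K] (A : Matrix ι ι K) (b c : ι → K)
    (d : K) (Q : Matrix ι ι K) : Prop :=
  A * Q * Aᵀ + vecMulVec b b = Q ∧ (A * Q) *ᵥ c + d • b = 0 ∧ c ⬝ᵥ (Q *ᵥ c) + d ^ 2 = 1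

namespace SchroederSeries

variable {ι K : Type*}

def gramian [DecidableEq ι] [Field K] (g : ι → K) : Matrix ι ι K :=
  diagonal fun i => 1 / (1 - g i ^ 2)

theorem gramian_transpose [DecidableEq ι] [Field K] (g : ι → K) : (gramian g)ᵀ = gramian g :=
  diagonal_transpose _

theorem gramian_posDef [DecidableEq ι] [Fintype ι] {g : ι → ℝ} (hg : ∀ i, 0 < 1 - g i ^ 2) :
    (gramian g).PosDef :=
  posDef_diagonal_iff.2 fun i => one_div_pos.2 (hg i)

variable [LinearOrder ι]

section CommRing

variable [CommRing K]

def feedbackMatrix [LocallyFiniteOrder ι] (g : ι → K) : Matrix ι ι K :=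
  of fun i j => if i = j then -g i else if j < i then (1 - g j ^ 2) * ∏ k ∈ Ioo j i, g k else 0

def inputGains [LocallyFiniteOrderBot ι] (g : ι → K) : ι → K :=
  fun i => ∏ k ∈ Iio i, g k

def outputGains [LocallyFiniteOrderTop ι] (g : ι → K) : ι → K :=
  fun i => (1 - g i ^ 2) * ∏ k ∈ Ioi i, g k

def directGain [Fintype ι] (g : ι → K) : K :=
  ∏ k, g k

variable (g : ι → K) [LocallyFiniteOrder ι]

theorem feedbackMatrix_apply_self (i : ι) : feedbackMatrix g i i = -g i := by
  simp [feedbackMatrix]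

theorem feedbackMatrix_apply_of_lt {i j : ι} (h : j < i) :
    feedbackMatrix g i j = (1 - g j ^ 2) * ∏ k ∈ Ioo j i, g k := by
  simp [feedbackMatrix, h, h.ne']

theorem feedbackMatrix_apply_of_gt {i j : ι} (h : i < j) : feedbackMatrix g i j = 0 := by
  simp [feedbackMatrix, h.ne, h.not_gt]

variable [LocallyFiniteOrderBot ι]

theorem feedbackMatrix_mulVec_apply [Fintype ι] (v : ι → K) (i : ι) :
    (feedbackMatrix g *ᵥ v) i =
      ∑ m ∈ Iio i, (1 - g m ^ 2) * (∏ k ∈ Ioo m i, g k) * v m - g i * v i := by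
  rw [mulVec, dotProduct, ← sum_subset (subset_univ (Iic i)), ← Iio_insert, sum_insert (by simp),
    add_comm, feedbackMatrix_apply_self, sub_eq_add_neg, neg_mul]
  · congr 1
    exact sum_congr rfl fun m hm => by rw [feedbackMatrix_apply_of_lt g (mem_Iio.1 hm)]
  · intro m _ hm
    rw [feedbackMatrix_apply_of_gt g (not_le.1 (mt mem_Iic.2 hm)), zero_mul]

theorem sum_Iio_one_sub_sq_mul_sq_add_inputGains_sq (i : ι) :
    ∑ m ∈ Iio i, (1 - g m ^ 2) * (∏ k ∈ Ioo m i, g k) ^ 2 + inputGains g i ^ 2 = 1 := by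
  have hfilter : ∀ m, {k ∈ Iio i | m < k} = Ioo m i := fun m => by grind
  simp_rw [inputGains, ← prod_pow]
  simpa only [hfilter] using sum_one_sub_mul_prod_gt_add_prod (Iio i) (g · ^ 2)

theorem sum_Iio_mul_add_inputGains_mul {i : ι} (x : K) {v : ι → K}
    (hv : ∀ m < i, v m = (∏ k ∈ Ioo m i, g k) * x) :
    ∑ m ∈ Iio i, (1 - g m ^ 2) * (∏ k ∈ Ioo m i, g k) * v m + inputGains g i * (inputGains g i * x)
      = x := by
  calc _ = (∑ m ∈ Iio i, (1 - g m ^ 2) * (∏ k ∈ Ioo m i, g k) ^ 2 + inputGains g i ^ 2) * x := by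
        rw [add_mul, sum_mul]
        congr 1
        · exact sum_congr rfl fun m hm => by rw [hv m (mem_Iio.1 hm)]; ring
        · ring
    _ = x := by rw [sum_Iio_one_sub_sq_mul_sq_add_inputGains_sq, one_mul]

end CommRing

variable [Field K] [Fintype ι] {g : ι → K}

section

variable [LocallyFiniteOrderTop ι]

theorem gramian_mulVec_outputGains (hg : ∀ i, 1 - g i ^ 2 ≠ 0) :
    gramian g *ᵥ outputGains g = fun i => ∏ k ∈ Ioi i, g k := by
  ext i
  rw [gramian, mulVec_diagonal, outputGains, one_div, inv_mul_cancel_left₀ (hg i)]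

theorem outputGains_dotProduct_gramian_mulVec_add (hg : ∀ i, 1 - g i ^ 2 ≠ 0) :
    outputGains g ⬝ᵥ (gramian g *ᵥ outputGains g) + directGain g ^ 2 = 1 := by
  rw [gramian_mulVec_outputGains hg]
  simp_rw [dotProduct, outputGains, directGain, mul_assoc, ← sq, ← prod_pow, ← filter_lt_eq_Ioi]
  exact sum_one_sub_mul_prod_gt_add_prod univ (g · ^ 2)

end

variable [LocallyFiniteOrder ι]

theorem feedbackMatrix_mul_gramian_mul_transpose_apply (i j : ι) :
    (feedbackMatrix g * gramian g * (feedbackMatrix g)ᵀ) i j =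
      (feedbackMatrix g *ᵥ fun m => feedbackMatrix g j m / (1 - g m ^ 2)) i := by
  rw [mul_apply]
  simp only [gramian, mul_diagonal, transpose_apply, mulVec, dotProduct]
  exact sum_congr rfl fun m _ => by ring

variable [LocallyFiniteOrderBot ι]

theorem feedbackMatrix_mul_gramian_mul_transpose_add_apply_of_le (hg : ∀ i, 1 - g i ^ 2 ≠ 0)
    {i j : ι} (hij : i ≤ j) :
    (feedbackMatrix g * gramian g * (feedbackMatrix g)ᵀ + vecMulVec (inputGains g) (inputGains g))
      i j = gramian g i j := by
  have key := sum_Iio_mul_add_inputGains_mul g (∏ k ∈ Ico i j, g k)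
    (v := fun m => feedbackMatrix g j m / (1 - g m ^ 2)) fun m hm => by
      rw [feedbackMatrix_apply_of_lt g (hm.trans_le hij), mul_div_cancel_left₀ _ (hg m),
        prod_Ioo_mul_prod_Ico g hm hij]
  have hb : inputGains g j = inputGains g i * ∏ k ∈ Ico i j, g k :=
    (prod_Iio_mul_prod_Ico g hij).symm
  rw [Matrix.add_apply, feedbackMatrix_mul_gramian_mul_transpose_apply,
    feedbackMatrix_mulVec_apply, vecMulVec_apply, hb]
  rcases hij.eq_or_lt with rfl | hlt
  · simp only [Ico_self, prod_empty] at key ⊢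
    have hdiag : 1 / (1 - g i ^ 2) = 1 + g i ^ 2 / (1 - g i ^ 2) := by field_simp [hg i]; ring
    rw [feedbackMatrix_apply_self, gramian, diagonal_apply_eq, hdiag]
    linear_combination key
  · rw [← Ioo_insert_left hlt, prod_insert (by simp)] at key ⊢
    rw [feedbackMatrix_apply_of_lt g hlt, mul_div_cancel_left₀ _ (hg i), gramian,
      diagonal_apply_ne _ hlt.ne]
    linear_combination key

theorem feedbackMatrix_mul_gramian_mul_transpose_add (hg : ∀ i, 1 - g i ^ 2 ≠ 0) :
    feedbackMatrix g * gramian g * (feedbackMatrix g)ᵀ + vecMulVec (inputGains g) (inputGains g) =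
      gramian g := by
  set M := feedbackMatrix g * gramian g * (feedbackMatrix g)ᵀ +
    vecMulVec (inputGains g) (inputGains g)
  have hM : Mᵀ = M := by
    simp only [M, transpose_add, Matrix.transpose_mul, transpose_transpose, gramian_transpose,
      transpose_vecMulVec, Matrix.mul_assoc]
  ext i j
  rcases le_total i j with hij | hji
  · exact feedbackMatrix_mul_gramian_mul_transpose_add_apply_of_le hg hij
  · calc M i j = M j i := (congrFun₂ hM i j).symm
      _ = gramian g j i := feedbackMatrix_mul_gramian_mul_transpose_add_apply_of_le hg hji
      _ = gramian g i j := congrFun₂ (gramian_transpose g) i j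

variable [LocallyFiniteOrderTop ι]

theorem feedbackMatrix_mul_gramian_mulVec_outputGains_add (hg : ∀ i, 1 - g i ^ 2 ≠ 0) :
    (feedbackMatrix g * gramian g) *ᵥ outputGains g + directGain g • inputGains g = 0 := by
  ext i
  have key := sum_Iio_mul_add_inputGains_mul g (∏ k ∈ Ici i, g k)
    (v := fun m => ∏ k ∈ Ioi m, g k) fun m hm => (prod_Ioo_mul_prod_Ici g hm).symm
  have hd : directGain g = inputGains g i * ∏ k ∈ Ici i, g k := (prod_Iio_mul_prod_Ici g i).symm
  rw [← Ioi_insert, prod_insert (by simp)] at key hd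
  rw [Pi.add_apply, ← mulVec_mulVec, gramian_mulVec_outputGains hg, feedbackMatrix_mulVec_apply,
    Pi.smul_apply, smul_eq_mul, hd, Pi.zero_apply]
  linear_combination key

theorem isUniallpass (hg : ∀ i, 1 - g i ^ 2 ≠ 0) :
    IsUniallpass (feedbackMatrix g) (inputGains g) (outputGains g) (directGain g) (gramian g) :=
  ⟨feedbackMatrix_mul_gramian_mul_transpose_add hg,
    feedbackMatrix_mul_gramian_mulVec_outputGains_add hg,
    outputGains_dotProduct_gramian_mulVec_add hg⟩

end SchroederSeries

theorem schroeder_series_uniallpass_general {N : ℕ}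
    (g : Fin N → ℝ) (hg : ∀ i, |g i| < 1) :
    let A : Matrix (Fin N) (Fin N) ℝ := Matrix.of fun i j =>
      if i = j then -g i
      else if j < i then (1 - g j ^ 2) * ∏ k ∈ Finset.Ioo j i, g k
      else 0
    let b : Fin N → ℝ := fun i => ∏ k ∈ Finset.Iio i, g k
    let c : Fin N → ℝ := fun i => (1 - g i ^ 2) * ∏ k ∈ Finset.Ioi i, g k
    let d : ℝ := ∏ k, g k
    let Q : Matrix (Fin N) (Fin N) ℝ := Matrix.diagonal fun i => 1 / (1 - g i ^ 2)
    Q.PosDef ∧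
    A * Q * Aᵀ + Matrix.vecMulVec b b = Q ∧
    (A * Q) *ᵥ c + d • b = 0 ∧
    c ⬝ᵥ (Q *ᵥ c) + d ^ 2 = 1 := by
  have hpos : ∀ i, 0 < 1 - g i ^ 2 := fun i => sub_pos.2 ((sq_lt_one_iff_abs_lt_one _).2 (hg i))
  exact ⟨SchroederSeries.gramian_posDef hpos, SchroederSeries.isUniallpass fun i => (hpos i).ne'⟩

/-- The delay state-space realization of a series of `N` Schroeder allpass filters
with gains `g_1,…,g_N` satisfies the SISO uniallpass condition with the diagonal
positive definite matrix `Q = diagonal (1/(1 − g_i²))`. -/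
theorem schroeder_series_uniallpass {N : ℕ} (hN : 1 ≤ N)
    (g : Fin N → ℝ) (hg : ∀ i, |g i| < 1) :
    let A : Matrix (Fin N) (Fin N) ℝ := Matrix.of fun i j =>
      if i = j then -g i
      else if j < i then (1 - g j ^ 2) * ∏ k ∈ Finset.Ioo j i, g k
      else 0
    let b : Fin N → ℝ := fun i => ∏ k ∈ Finset.Iio i, g k
    let c : Fin N → ℝ := fun i => (1 - g i ^ 2) * ∏ k ∈ Finset.Ioi i, g k
    let d : ℝ := ∏ k, g k
    let Q : Matrix (Fin N) (Fin N) ℝ := Matrix.diagonal fun i => 1 / (1 - g i ^ 2)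
    Q.PosDef ∧
    A * Q * Aᵀ + Matrix.vecMulVec b b = Q ∧
    (A * Q) *ᵥ c + d • b = 0 ∧
    c ⬝ᵥ (Q *ᵥ c) + d ^ 2 = 1 :=
  schroeder_series_uniallpass_general g hg
end

section
/- Let U be a real orthogonal N×N matrix (U Uᵀ = I) and let g be a real number with |g| < 1. Define A = −g·U, B = (1+g)·I, C = (1−g)·U, D = g·I, and Q = ((1+g)/(1−g))·I. Then Q is diagonal positive definite and A Q Aᵀ + B Bᵀ = Q, A Q Cᵀ + B Dᵀ = 0, and C Q Cᵀ + D Dᵀ = I. -/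
/-!
Since `U Uᵀ = I`, each of the products `A Q Aᵀ`, `A Q Cᵀ`, `C Q Cᵀ`, `B Bᵀ`, `B Dᵀ`, `D Dᵀ` is a
scalar matrix, so the three uniallpass identities reduce to identities between rational
functions of `g`; these hold as soon as `g ≠ 1`, and `|g| < 1` makes the gain of `Q` positive.
-/

open Matrix

namespace Matrix

variable {m n R : Type*} [Fintype m] [Fintype n] [DecidableEq m] [DecidableEq n] [CommSemiring R]

theorem smul_mul_scalar_mul_transpose_smul {U : Matrix m n R} (hU : U * Uᵀ = 1) (a q c : R) :
    a • U * scalar n q * (c • U)ᵀ = scalar m (a * q * c) := by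
  simp only [scalar_apply, ← smul_one_eq_diagonal, transpose_smul, smul_mul, Matrix.mul_smul,
    Matrix.mul_one, hU, smul_smul]
  ring_nf

theorem smul_one_mul_transpose_smul_one (a b : R) :
    (a • 1 : Matrix m m R) * (b • 1 : Matrix m m R)ᵀ = scalar m (a * b) := by
  rw [transpose_smul, transpose_one, smul_mul_smul_comm, mul_one, scalar_apply, smul_one_eq_diagonal]

end Matrix

/-- Poletti's unitary reverberator `A = −gU`, `B = (1+g)I`, `C = (1−g)U`,
`D = gI` satisfies the uniallpass condition with the diagonal positive definite
matrix `Q = ((1+g)/(1−g)) I`. -/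
theorem poletti_uniallpass {N : ℕ}
    (U : Matrix (Fin N) (Fin N) ℝ) (hU : U * Uᵀ = 1)
    (g : ℝ) (hg : |g| < 1) :
    let A : Matrix (Fin N) (Fin N) ℝ := (-g) • U
    let B : Matrix (Fin N) (Fin N) ℝ := (1 + g) • (1 : Matrix (Fin N) (Fin N) ℝ)
    let C : Matrix (Fin N) (Fin N) ℝ := (1 - g) • U
    let D : Matrix (Fin N) (Fin N) ℝ := g • (1 : Matrix (Fin N) (Fin N) ℝ)
    let Q : Matrix (Fin N) (Fin N) ℝ :=
      Matrix.diagonal fun _ => (1 + g) / (1 - g)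
    Q.PosDef ∧
    A * Q * Aᵀ + B * Bᵀ = Q ∧
    A * Q * Cᵀ + B * Dᵀ = 0 ∧
    C * Q * Cᵀ + D * Dᵀ = 1 := by
  obtain ⟨hg₁, hg₂⟩ := abs_lt.mp hg
  have h1g : 1 - g ≠ 0 := (sub_pos.2 hg₂).ne'
  simp only [← scalar_apply, smul_mul_scalar_mul_transpose_smul hU, smul_one_mul_transpose_smul_one,
    ← map_add]
  rw [← (scalar (Fin N)).map_zero, ← (scalar (Fin N)).map_one]
  refine ⟨posDef_diagonal_iff.2 fun _ => div_pos (by linarith) (by linarith), ?_, ?_, ?_⟩ <;>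
    congr 1 <;> field_simp <;> ring
end
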